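/- arXiv:2209.08137 — 9 statements merged into one kernel-verified Lean document; each statement's English description precedes it below -/
import Mathlib

section
/- Let X be a Polish space and βX its Stone–Čech compactification. Then βX \ X is a countable union of compact G_delta subsets of βX; in particular, βX \ X belongs to the Baire sigma-algebra of βX (the sigma-algebra generated by the real-valued continuous functions). -/
open Set Topology
open scoped ENNReal

lemma IsGδ.preimage' {α β : Type*} [TopologicalSpace α] [TopologicalSpace β] {s : Set β}
    (hs : IsGδ s) {f : α → β} (hf : Continuous f) : IsGδ (f ⁻¹' s) := by
  obtain ⟨T, hTo, hTc, rfl⟩ := hs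
  rw [Set.sInter_eq_biInter, Set.preimage_iInter₂]
  exact IsGδ.biInter_of_isOpen hTc fun t ht => (hTo t ht).preimage hf

open unitInterval in
/-- In a completely regular space, neighborhoods in the Stone–Čech compactification pull back
to neighborhoods. -/
lemma stoneCech_nbhd_pullback {X : Type*} [TopologicalSpace X] [CompletelyRegularSpace X]
    {x : X} {U : Set X} (hU : IsOpen U) (hx : x ∈ U) :
    ∃ V : Set (StoneCech X), IsOpen V ∧ stoneCechUnit x ∈ V ∧ stoneCechUnit ⁻¹' V ⊆ U := by
  obtain ⟨g, hg, hgx, hgU⟩ :=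
    CompletelyRegularSpace.completely_regular x Uᶜ hU.isClosed_compl (by simpa)
  refine ⟨(fun z => (((stoneCechExtend hg z : I) : ℝ))) ⁻¹' Set.Iio 1, ?_, ?_, ?_⟩
  · exact (continuous_subtype_val.comp (continuous_stoneCechExtend hg)).isOpen_preimage _
      isOpen_Iio
  · have h1 : stoneCechExtend hg (stoneCechUnit x) = g x :=
      congrFun (stoneCechExtend_extends hg) x
    simp only [Set.mem_preimage, Set.mem_Iio, h1, hgx]
    norm_num
  · intro x' hx'
    by_contra h
    have h1 : stoneCechExtend hg (stoneCechUnit x') = g x' :=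
      congrFun (stoneCechExtend_extends hg) x'
    have h2 : g x' = 1 := hgU h
    simp only [Set.mem_preimage, Set.mem_Iio, h1, h2] at hx'
    norm_num at hx'

/-- For a Polish space X, the remainder βX \ X of its Stone–Čech compactification is a
countable union of compact Gδ sets; in particular it belongs to the Baire σ-algebra of βX
(the σ-algebra generated by the real-valued continuous functions). -/
theorem stoneCech_remainder_countable_union_compact_Gδ
    {X : Type*} [TopologicalSpace X] [PolishSpace X] :
    (∃ M : ℕ → Set (StoneCech X),
        (∀ n, IsCompact (M n) ∧ IsGδ (M n)) ∧
        (⋃ n, M n) = (Set.range (stoneCechUnit : X → StoneCech X))ᶜ) ∧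
      @MeasurableSet (StoneCech X) (⨆ f : C(StoneCech X, ℝ), MeasurableSpace.comap f (borel ℝ))
        (Set.range (stoneCechUnit : X → StoneCech X))ᶜ := by
  classical
  letI := TopologicalSpace.upgradeIsCompletelyMetrizable X
  set e : X → StoneCech X := stoneCechUnit with he
  -- the open sets U n witnessing that range e is Gδ
  set U : ℕ → Set (StoneCech X) := fun n =>
    {y | ∃ V : Set (StoneCech X), IsOpen V ∧ y ∈ V ∧
      EMetric.diam (e ⁻¹' V) ≤ ((n : ℝ≥0∞) + 1)⁻¹} with hU
  have hUopen : ∀ n, IsOpen (U n) := by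
    intro n
    rw [isOpen_iff_mem_nhds]
    rintro y ⟨V, hVo, hVy, hVd⟩
    exact Filter.mem_of_superset (hVo.mem_nhds hVy) fun z hz => ⟨V, hVo, hz, hVd⟩
  have hUrange : ∀ n, Set.range e ⊆ U n := by
    rintro n _ ⟨x, rfl⟩
    have hr : (0 : ℝ≥0∞) < ((n : ℝ≥0∞) + 1)⁻¹ / 2 := by
      apply ENNReal.div_pos
      · exact ENNReal.inv_ne_zero.mpr
          (ENNReal.add_ne_top.mpr ⟨ENNReal.natCast_ne_top n, ENNReal.one_ne_top⟩)
      · exact ENNReal.ofNat_ne_top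
    obtain ⟨V, hVo, hVx, hVsub⟩ := stoneCech_nbhd_pullback
      (U := EMetric.ball x (((n : ℝ≥0∞) + 1)⁻¹ / 2)) EMetric.isOpen_ball
      (EMetric.mem_ball_self hr)
    refine ⟨V, hVo, hVx, ?_⟩
    calc EMetric.diam (e ⁻¹' V) ≤ EMetric.diam (EMetric.ball x (((n : ℝ≥0∞) + 1)⁻¹ / 2)) :=
          EMetric.diam_mono hVsub
      _ ≤ 2 * (((n : ℝ≥0∞) + 1)⁻¹ / 2) := EMetric.diam_ball
      _ = ((n : ℝ≥0∞) + 1)⁻¹ := by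
          rw [mul_comm, ENNReal.div_mul_cancel two_ne_zero ENNReal.ofNat_ne_top]
  have hUsub : ⋂ n, U n ⊆ Set.range e := by
    intro y hy
    have hne : (Filter.comap e (𝓝 y)).NeBot := by
      rw [Filter.comap_neBot_iff]
      intro t ht
      have := denseRange_stoneCechUnit (α := X) y
      rw [mem_closure_iff_nhds] at this
      obtain ⟨z, hz1, x, hx⟩ := this t ht
      exact ⟨x, by rwa [he, hx]⟩
    have hC : Cauchy (Filter.comap e (𝓝 y)) := by
      rw [EMetric.cauchy_iff]
      refine ⟨hne.ne', fun ε hε => ?_⟩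
      obtain ⟨n, hn⟩ := ENNReal.exists_inv_nat_lt hε.ne'
      have hy' : y ∈ U n := Set.mem_iInter.mp hy n
      obtain ⟨V, hVo, hVy, hVd⟩ := hy'
      refine ⟨e ⁻¹' V, Filter.preimage_mem_comap (hVo.mem_nhds hVy), ?_⟩
      intro a ha b hb
      calc edist a b ≤ EMetric.diam (e ⁻¹' V) := EMetric.edist_le_diam_of_mem ha hb
        _ ≤ ((n : ℝ≥0∞) + 1)⁻¹ := hVd
        _ ≤ ((n : ℝ≥0∞))⁻¹ := ENNReal.inv_le_inv.mpr (le_add_of_nonneg_right zero_le_one)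
        _ < ε := hn
    obtain ⟨x, hx⟩ := CompleteSpace.complete hC
    refine ⟨x, ?_⟩
    have h1 : Filter.map e (Filter.comap e (𝓝 y)) ≤ 𝓝 (e x) :=
      le_trans (Filter.map_mono hx) (continuous_stoneCechUnit.tendsto x)
    have h2 : Filter.map e (Filter.comap e (𝓝 y)) ≤ 𝓝 y := Filter.map_comap_le
    haveI : (Filter.map e (Filter.comap e (𝓝 y))).NeBot := Filter.NeBot.map hne e
    exact tendsto_nhds_unique (Filter.tendsto_id'.mpr h1) (Filter.tendsto_id'.mpr h2)
  -- complete regularity of the compactification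
  haveI : NormalSpace (StoneCech X) := NormalSpace.of_compactSpace_r1Space
  have hg : ∀ (n : ℕ) (x : X), ∃ g : StoneCech X → unitInterval, Continuous g ∧
      g (e x) = 0 ∧ Set.EqOn g 1 (U n)ᶜ := fun n x =>
    CompletelyRegularSpace.completely_regular (e x) (U n)ᶜ (hUopen n).isClosed_compl
      (by simp; exact hUrange n ⟨x, rfl⟩)
  choose g hgc hgx hgU using hg
  -- countable subcover of range e by cozero sets inside U n
  have hcov : ∀ n : ℕ, ∃ T : Set X, T.Countable ∧
      Set.range e ⊆ ⋃ x ∈ T, {z | (g n x z : ℝ) ≠ 1} := by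
    intro n
    have hopen : ∀ x : X, IsOpen (e ⁻¹' {z | (g n x z : ℝ) ≠ 1}) := by
      intro x
      apply (continuous_stoneCechUnit.comp continuous_id).isOpen_preimage
      exact isOpen_compl_iff.mpr
        (isClosed_singleton.preimage (continuous_subtype_val.comp (hgc n x)))
    obtain ⟨T, hTc, hTu⟩ := TopologicalSpace.isOpen_iUnion_countable
      (fun x : X => e ⁻¹' {z | (g n x z : ℝ) ≠ 1}) hopen
    refine ⟨T, hTc, ?_⟩
    rintro _ ⟨x', rfl⟩
    have hx' : x' ∈ ⋃ x, e ⁻¹' {z | (g n x z : ℝ) ≠ 1} := by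
      refine Set.mem_iUnion.mpr ⟨x', ?_⟩
      simp only [Set.mem_preimage, Set.mem_setOf_eq, hgx n x']
      norm_num
    rw [← hTu] at hx'
    obtain ⟨x, hxT, hmem⟩ := by simpa using hx'
    refine Set.mem_biUnion hxT ?_
    show ((g n x (e x') : ℝ)) ≠ 1
    exact fun hc => hmem (Set.Icc.coe_eq_one.mp hc)
  choose T hTc hTcov using hcov
  -- the compact Gδ pieces
  set M : ℕ → Set (StoneCech X) := fun n => ⋂ x ∈ T n, {z | (g n x z : ℝ) = 1} with hM
  have hMclosed : ∀ n, IsClosed (M n) :=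
    fun n => isClosed_biInter fun x _ =>
      isClosed_singleton.preimage (continuous_subtype_val.comp (hgc n x))
  have hMU : ∀ n, M n ⊆ (U n)ᶜᶜ → True := fun _ _ => trivial
  have hMsub : ∀ n, M n ⊆ (Set.range e)ᶜ := by
    intro n z hz hze
    obtain ⟨x, hxT, hx1⟩ := by simpa using hTcov n hze
    have hcoe : ((g n x z : ℝ)) = 1 := Set.mem_iInter₂.mp hz x hxT
    exact hx1 (Set.Icc.coe_eq_one.mp hcoe)
  have hMsup : (Set.range e)ᶜ ⊆ ⋃ n, M n := by
    intro z hz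
    have : z ∉ ⋂ n, U n := fun h => hz (hUsub h)
    obtain ⟨n, hn⟩ := by simpa using this
    refine Set.mem_iUnion.mpr ⟨n, Set.mem_iInter₂.mpr fun x hxT => ?_⟩
    have := hgU n x hn
    simp only [Pi.one_apply] at this
    simp [this]
  have hMunion : (⋃ n, M n) = (Set.range e)ᶜ :=
    le_antisymm (Set.iUnion_subset hMsub) hMsup
  constructor
  · refine ⟨M, fun n => ⟨(hMclosed n).isCompact, ?_⟩, hMunion⟩
    exact IsGδ.biInter (hTc n) fun x _ =>
      (IsGδ.singleton (1 : ℝ)).preimage' (continuous_subtype_val.comp (hgc n x))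
  · rw [← hMunion]
    apply MeasurableSet.iUnion
    intro n
    apply MeasurableSet.biInter (hTc n)
    intro x _
    have hle : MeasurableSpace.comap
        (⟨fun z => ((g n x z : ℝ)), continuous_subtype_val.comp (hgc n x)⟩ :
          C(StoneCech X, ℝ))
        (borel ℝ) ≤ ⨆ f : C(StoneCech X, ℝ), MeasurableSpace.comap f (borel ℝ) :=
      le_iSup (fun f : C(StoneCech X, ℝ) => MeasurableSpace.comap f (borel ℝ)) _
    apply hle
    rw [MeasurableSpace.measurableSet_comap]
    refine ⟨{1}, ?_, rfl⟩
    exact BorelSpace.measurable_eq (α := ℝ) ▸ measurableSet_singleton (1 : ℝ)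
end

section
/- Let X be a Polish space, K a compact metrizable compactification of X. Every bounded continuous function f on X is the pointwise limit on X of a nonincreasing sequence of functions h_n that are restrictions to X of continuous functions on K (equivalently, bounded uniformly continuous functions on X). -/
/-!
Embed `X` in `K` and give `K` a compatible metric. The sup-convolutions
`g_L k = ⨆ x, f x - L * dist (e x) k` are `L`-Lipschitz on `K`, decrease in `L`, and lie
above `f` on `X`. At a point of `X`, for large `L` the supremum is only approached by points
`e y` close to `e x`, where `f y` is close to `f x` by continuity of `f` and the fact that `e`
is an embedding; hence `g_L (e x) → f x`.
-/

open Set Topology Filter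
open scoped NNReal

noncomputable section

variable {X K : Type*} [PseudoMetricSpace K] {e : X → K} {f : X → ℝ}

def lipschitzUpperApprox (e : X → K) (f : X → ℝ) (L : ℝ≥0) (k : K) : ℝ :=
  ⨆ x, f x - L * dist (e x) k

theorem bddAbove_range_sub_mul_dist (hf : BddAbove (range f)) (L : ℝ≥0) (k : K) :
    BddAbove (range fun x => f x - L * dist (e x) k) := by
  obtain ⟨M, hM⟩ := hf
  refine ⟨M, forall_mem_range.2 fun x => ?_⟩
  linarith [hM (mem_range_self x), mul_nonneg L.coe_nonneg (dist_nonneg (x := e x) (y := k))]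

theorem sub_mul_dist_le_lipschitzUpperApprox (hf : BddAbove (range f)) (L : ℝ≥0) (x : X)
    (k : K) : f x - L * dist (e x) k ≤ lipschitzUpperApprox e f L k :=
  le_ciSup (bddAbove_range_sub_mul_dist hf L k) x

theorem le_lipschitzUpperApprox_self (hf : BddAbove (range f)) (L : ℝ≥0) (x : X) :
    f x ≤ lipschitzUpperApprox e f L (e x) := by
  simpa using sub_mul_dist_le_lipschitzUpperApprox (e := e) hf L x (e x)

theorem lipschitzWith_lipschitzUpperApprox [Nonempty X] (hf : BddAbove (range f)) (L : ℝ≥0) :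
    LipschitzWith L (lipschitzUpperApprox e f L) := by
  refine LipschitzWith.of_le_add_mul L fun k k' => ciSup_le fun x => ?_
  have hx := sub_mul_dist_le_lipschitzUpperApprox (e := e) hf L x k'
  nlinarith [dist_triangle (e x) k k', L.coe_nonneg]

theorem antitone_lipschitzUpperApprox [Nonempty X] (hf : BddAbove (range f)) (k : K) :
    Antitone fun L => lipschitzUpperApprox e f L k := by
  intro L L' hLL'
  refine ciSup_le fun x => le_trans ?_ (sub_mul_dist_le_lipschitzUpperApprox hf L x k)
  have : (L : ℝ) ≤ L' := hLL'
  nlinarith [dist_nonneg (x := e x) (y := k)]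

/-- Points `e y` at distance `≥ δ` from `k` contribute at most `M - L * δ` to the supremum. -/
theorem lipschitzUpperApprox_le [Nonempty X] {L : ℝ≥0} {k : K} {δ c M : ℝ}
    (hM : ∀ y, f y ≤ M) (hnear : ∀ y, dist (e y) k < δ → f y ≤ c) (hL : M - c ≤ L * δ) :
    lipschitzUpperApprox e f L k ≤ c := by
  refine ciSup_le fun y => ?_
  rcases lt_or_ge (dist (e y) k) δ with hy | hy
  · linarith [hnear y hy, mul_nonneg L.coe_nonneg (dist_nonneg (x := e y) (y := k))]
  · nlinarith [hM y, mul_le_mul_of_nonneg_left hy L.coe_nonneg]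

theorem tendsto_lipschitzUpperApprox [TopologicalSpace X] [Nonempty X]
    (hf : BddAbove (range f)) (he : IsInducing e) {x : X} (hx : UpperSemicontinuousAt f x) :
    Tendsto (fun L => lipschitzUpperApprox e f L (e x)) atTop (𝓝 (f x)) := by
  refine tendsto_order.2 ⟨fun a ha => Eventually.of_forall fun L =>
    ha.trans_le (le_lipschitzUpperApprox_self hf L x), fun c hc => ?_⟩
  obtain ⟨c', hxc', hc'c⟩ := exists_between hc
  obtain ⟨δ, hδ, hnear⟩ : ∃ δ > 0, ∀ y, dist (e y) (e x) < δ → f y < c' := by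
    have hev := hx c' hxc'
    rw [he.nhds_eq_comap, eventually_comap, Metric.eventually_nhds_iff] at hev
    obtain ⟨δ, hδ, h⟩ := hev
    exact ⟨δ, hδ, fun y hy => h hy y rfl⟩
  obtain ⟨M, hM⟩ := hf
  filter_upwards [eventually_ge_atTop ((M - c') / δ).toNNReal] with L hL
  have hL' : M - c' ≤ L * δ := (div_le_iff₀ hδ).1 (Real.toNNReal_le_iff_le_coe.1 hL)
  exact (lipschitzUpperApprox_le (fun y => hM (mem_range_self y))
    (fun y hy => (hnear y hy).le) hL').trans_lt hc'c

end

theorem bounded_continuous_decreasing_limit_of_uniformly_continuous_general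
    {X K : Type*} [TopologicalSpace X]
    [TopologicalSpace K]
    [TopologicalSpace.MetrizableSpace K]
    (e : X → K) (he : IsEmbedding e)
    (f : BoundedContinuousFunction X ℝ) :
    ∃ h : ℕ → C(K, ℝ),
      (∀ x : X, Antitone fun n => h n (e x)) ∧
      (∀ x : X, Tendsto (fun n => h n (e x)) atTop (nhds (f x))) := by
  let : MetricSpace K := TopologicalSpace.metrizableSpaceMetric K
  rcases isEmpty_or_nonempty X with hX | hX
  · exact ⟨fun _ => 0, isEmptyElim, isEmptyElim⟩
  have hf : BddAbove (range f) := f.isBounded_range.bddAbove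
  refine ⟨fun n => ⟨lipschitzUpperApprox e f n,
      (lipschitzWith_lipschitzUpperApprox hf n).continuous⟩,
    fun x => (antitone_lipschitzUpperApprox hf (e x)).comp_monotone Nat.mono_cast,
    fun x => ?_⟩
  exact (tendsto_lipschitzUpperApprox hf he.isInducing
    f.continuous.continuousAt.upperSemicontinuousAt).comp tendsto_natCast_atTop_atTop

/-- Every bounded continuous function on a Polish space X, densely embedded in a compact
metrizable space K, is the pointwise limit on X of a nonincreasing sequence of restrictions
to X of continuous functions on K. -/
theorem bounded_continuous_decreasing_limit_of_uniformly_continuous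
    {X K : Type*} [TopologicalSpace X] [PolishSpace X]
    [TopologicalSpace K] [CompactSpace K] [T2Space K]
    [TopologicalSpace.MetrizableSpace K]
    (e : X → K) (he : IsEmbedding e) (hd : DenseRange e)
    (f : BoundedContinuousFunction X ℝ) :
    ∃ h : ℕ → C(K, ℝ),
      (∀ x : X, Antitone fun n => h n (e x)) ∧
      (∀ x : X, Tendsto (fun n => h n (e x)) atTop (nhds (f x))) :=
  bounded_continuous_decreasing_limit_of_uniformly_continuous_general e he f
end

section
/- Let X be a Polish space, c : P(X) → [0,∞] convex and weak*-lower-semicontinuous, and define ũ(f) = inf { ∫ f dμ + c(μ) : μ ∈ P(X) } for bounded Borel functions f on X. Assume c is not identically +∞. Then ũ is concave, monotone, satisfies ũ(f + a) = ũ(f) + a for constants a, and has the Fatou property: if f_n is a uniformly bounded sequence of Borel functions decreasing pointwise to f, then ũ(f_n) ↓ ũ(f). -/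
open Set Topology Filter MeasureTheory

/-- Extension to bounded Borel functions: the penalized infimum ũ(f) = inf {∫ f dμ + c(μ)}
with c convex, weak*-lsc and not identically +∞, is concave, monotone, translation
invariant and has the Fatou property on bounded Borel functions. -/
theorem extension_to_bounded_borel
    {X : Type*} [TopologicalSpace X] [PolishSpace X]
    [MeasurableSpace X] [BorelSpace X]
    (c : ProbabilityMeasure X → ENNReal)
    (hlsc : LowerSemicontinuous c)
    (hconvex : ∀ μ ν : ProbabilityMeasure X, ∀ t : NNReal, t ≤ 1 →
      ∀ σ : ProbabilityMeasure X,
        σ.toMeasure = t • μ.toMeasure + (1 - t) • ν.toMeasure →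
        c σ ≤ t * c μ + (1 - t) * c ν)
    (hproper : ∃ μ : ProbabilityMeasure X, c μ ≠ ⊤)
    (U : (X → ℝ) → ℝ)
    (hU : ∀ f : X → ℝ, U f = sInf {r : ℝ | ∃ μ : ProbabilityMeasure X,
      c μ ≠ ⊤ ∧ r = ∫ x, f x ∂μ.toMeasure + (c μ).toReal}) :
    (∀ f g : X → ℝ, Measurable f → Measurable g → (∃ C, ∀ x, |f x| ≤ C) →
      (∃ C, ∀ x, |g x| ≤ C) → (∀ x, f x ≤ g x) → U f ≤ U g) ∧
    (∀ f g : X → ℝ, Measurable f → Measurable g → (∃ C, ∀ x, |f x| ≤ C) →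
      (∃ C, ∀ x, |g x| ≤ C) → ∀ t : ℝ, 0 ≤ t → t ≤ 1 →
      t * U f + (1 - t) * U g ≤ U (fun x => t * f x + (1 - t) * g x)) ∧
    (∀ f : X → ℝ, Measurable f → (∃ C, ∀ x, |f x| ≤ C) → ∀ a : ℝ,
      U (fun x => f x + a) = U f + a) ∧
    (∀ (f : ℕ → X → ℝ) (g : X → ℝ), (∀ n, Measurable (f n)) → Measurable g →
      (∃ C, ∀ n x, |f n x| ≤ C) →
      (∀ x, Antitone fun n => f n x) →
      (∀ x, Tendsto (fun n => f n x) atTop (nhds (g x))) →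
      Antitone (fun n => U (f n)) ∧ Tendsto (fun n => U (f n)) atTop (nhds (U g))) := by
  classical
  -- integrability of bounded measurable functions against probability measures
  have hint : ∀ (μ : ProbabilityMeasure X) (f : X → ℝ), Measurable f →
      (∃ C, ∀ x, |f x| ≤ C) → Integrable f μ.toMeasure := by
    rintro μ f hf ⟨C, hC⟩
    exact (integrable_const C).mono' hf.aestronglyMeasurable
      (ae_of_all _ fun x => by simpa [Real.norm_eq_abs] using hC x)
  -- the defining set
  have hmem : ∀ (f : X → ℝ) (μ : ProbabilityMeasure X), c μ ≠ ⊤ →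
      (∫ x, f x ∂μ.toMeasure + (c μ).toReal) ∈ {r : ℝ | ∃ μ : ProbabilityMeasure X,
        c μ ≠ ⊤ ∧ r = ∫ x, f x ∂μ.toMeasure + (c μ).toReal} :=
    fun f μ hμ => ⟨μ, hμ, rfl⟩
  have hne : ∀ f : X → ℝ, ({r : ℝ | ∃ μ : ProbabilityMeasure X,
      c μ ≠ ⊤ ∧ r = ∫ x, f x ∂μ.toMeasure + (c μ).toReal}).Nonempty := by
    intro f
    obtain ⟨μ, hμ⟩ := hproper
    exact ⟨_, hmem f μ hμ⟩
  -- lower bound on the defining set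
  have hlow : ∀ (f : X → ℝ), Measurable f → ∀ C : ℝ, (∀ x, |f x| ≤ C) →
      ∀ r ∈ {r : ℝ | ∃ μ : ProbabilityMeasure X,
        c μ ≠ ⊤ ∧ r = ∫ x, f x ∂μ.toMeasure + (c μ).toReal}, -C ≤ r := by
    rintro f hf C hC r ⟨μ, hμ, rfl⟩
    have h1 : -C ≤ ∫ x, f x ∂μ.toMeasure := by
      have : ∫ (_ : X), (-C) ∂μ.toMeasure ≤ ∫ x, f x ∂μ.toMeasure :=
        integral_mono (integrable_const _) (hint μ f hf ⟨C, hC⟩)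
          (fun x => neg_le_of_abs_le (hC x))
      simpa using this
    have := ENNReal.toReal_nonneg (a := c μ)
    linarith
  have hbb : ∀ (f : X → ℝ), Measurable f → (∃ C, ∀ x, |f x| ≤ C) →
      BddBelow {r : ℝ | ∃ μ : ProbabilityMeasure X,
        c μ ≠ ⊤ ∧ r = ∫ x, f x ∂μ.toMeasure + (c μ).toReal} := by
    rintro f hf ⟨C, hC⟩
    exact ⟨-C, fun r hr => hlow f hf C hC r hr⟩
  -- U f is below each competitor
  have hUle : ∀ (f : X → ℝ), Measurable f → (∃ C, ∀ x, |f x| ≤ C) →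
      ∀ (μ : ProbabilityMeasure X), c μ ≠ ⊤ →
      U f ≤ ∫ x, f x ∂μ.toMeasure + (c μ).toReal := by
    intro f hf hb μ hμ
    rw [hU f]
    exact csInf_le (hbb f hf hb) (hmem f μ hμ)
  -- lower bound on U f
  have hUge : ∀ (f : X → ℝ), Measurable f → ∀ C : ℝ, (∀ x, |f x| ≤ C) → -C ≤ U f := by
    intro f hf C hC
    rw [hU f]
    exact le_csInf (hne f) (hlow f hf C hC)
  -- monotonicity
  have mono : ∀ f g : X → ℝ, Measurable f → Measurable g → (∃ C, ∀ x, |f x| ≤ C) →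
      (∃ C, ∀ x, |g x| ≤ C) → (∀ x, f x ≤ g x) → U f ≤ U g := by
    intro f g hf hg hfb hgb hfg
    rw [hU g]
    refine le_csInf (hne g) ?_
    rintro r ⟨μ, hμ, rfl⟩
    refine (hUle f hf hfb μ hμ).trans (add_le_add_left ?_ _)
    exact integral_mono (hint μ f hf hfb) (hint μ g hg hgb) hfg
  -- translation (one-sided)
  have htr : ∀ f : X → ℝ, Measurable f → (∃ C, ∀ x, |f x| ≤ C) → ∀ a : ℝ,
      U (fun x => f x + a) ≤ U f + a := by
    intro f hf hfb a
    have h1 : U (fun x => f x + a) - a ≤ U f := by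
      rw [hU f]
      refine le_csInf (hne f) ?_
      rintro r ⟨μ, hμ, rfl⟩
      have h2 : U (fun x => f x + a) ≤ ∫ x, (f x + a) ∂μ.toMeasure + (c μ).toReal := by
        obtain ⟨C, hC⟩ := hfb
        refine hUle _ (hf.add_const a) ⟨C + |a|, fun x => ?_⟩ μ hμ
        calc |f x + a| ≤ |f x| + |a| := abs_add_le _ _
          _ ≤ C + |a| := by linarith [hC x]
      have h3 : ∫ x, (f x + a) ∂μ.toMeasure = ∫ x, f x ∂μ.toMeasure + a := by
        rw [integral_add (hint μ f hf hfb) (integrable_const a)]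
        simp
      rw [h3] at h2
      linarith
    linarith
  refine ⟨mono, ?_, ?_, ?_⟩
  · -- concavity
    intro f g hf hg hfb hgb t ht0 ht1
    obtain ⟨Cf, hCf⟩ := hfb
    obtain ⟨Cg, hCg⟩ := hgb
    have hh : Measurable fun x => t * f x + (1 - t) * g x :=
      (hf.const_mul t).add (hg.const_mul (1 - t))
    have hhb : ∃ C, ∀ x, |t * f x + (1 - t) * g x| ≤ C := by
      refine ⟨|t| * Cf + |1 - t| * Cg, fun x => ?_⟩
      calc |t * f x + (1 - t) * g x| ≤ |t * f x| + |(1 - t) * g x| := abs_add_le _ _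
        _ = |t| * |f x| + |1 - t| * |g x| := by rw [abs_mul, abs_mul]
        _ ≤ |t| * Cf + |1 - t| * Cg := by
            gcongr <;> [exact hCf x; exact hCg x]
    rw [hU fun x => t * f x + (1 - t) * g x]
    refine le_csInf (hne _) ?_
    rintro r ⟨μ, hμ, rfl⟩
    have hif := hint μ f hf ⟨Cf, hCf⟩
    have hig := hint μ g hg ⟨Cg, hCg⟩
    have hsplit : ∫ x, (t * f x + (1 - t) * g x) ∂μ.toMeasure =
        t * ∫ x, f x ∂μ.toMeasure + (1 - t) * ∫ x, g x ∂μ.toMeasure := by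
      rw [integral_add (hif.const_mul t) (hig.const_mul (1 - t)),
        integral_const_mul, integral_const_mul]
    rw [hsplit]
    have h1 : t * U f ≤ t * (∫ x, f x ∂μ.toMeasure + (c μ).toReal) :=
      mul_le_mul_of_nonneg_left (hUle f hf ⟨Cf, hCf⟩ μ hμ) ht0
    have h2 : (1 - t) * U g ≤ (1 - t) * (∫ x, g x ∂μ.toMeasure + (c μ).toReal) :=
      mul_le_mul_of_nonneg_left (hUle g hg ⟨Cg, hCg⟩ μ hμ) (by linarith)
    nlinarith
  · -- translation invariance
    intro f hf hfb a
    refine le_antisymm (htr f hf hfb a) ?_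
    obtain ⟨C, hC⟩ := hfb
    have hfa : Measurable fun x => f x + a := hf.add_const a
    have hfab : ∃ C, ∀ x, |f x + a| ≤ C := by
      refine ⟨C + |a|, fun x => ?_⟩
      calc |f x + a| ≤ |f x| + |a| := abs_add_le _ _
        _ ≤ C + |a| := by linarith [hC x]
    have := htr (fun x => f x + a) hfa hfab (-a)
    have heq : U (fun x => (f x + a) + (-a)) = U f := by
      congr 1
      funext x; ring
    rw [heq] at this
    linarith
  · -- Fatou property
    intro f g hf hg hfb hanti hft
    obtain ⟨C, hC⟩ := hfb
    have hgb : ∀ x, |g x| ≤ C := fun x =>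
      le_of_tendsto ((continuous_abs.tendsto _).comp (hft x))
        (Eventually.of_forall fun n => hC n x)
    have hgle : ∀ n x, g x ≤ f n x := by
      intro n x
      refine le_of_tendsto (hft x) ?_
      filter_upwards [eventually_ge_atTop n] with m hm
      exact hanti x hm
    have hant : Antitone fun n => U (f n) := by
      intro n m hnm
      exact mono (f m) (f n) (hf m) (hf n) ⟨C, hC m⟩ ⟨C, hC n⟩ (fun x => hanti x hnm)
    refine ⟨hant, ?_⟩
    have hbdd : BddBelow (Set.range fun n => U (f n)) := by
      refine ⟨-C, ?_⟩
      rintro r ⟨n, rfl⟩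
      exact hUge (f n) (hf n) C (hC n)
    have htend : Tendsto (fun n => U (f n)) atTop (𝓝 (⨅ n, U (f n))) :=
      tendsto_atTop_ciInf hant hbdd
    have hEQl : (⨅ n, U (f n)) = U g := by
      refine le_antisymm ?_ ?_
      · rw [hU g]
        refine le_csInf (hne g) ?_
        rintro r ⟨μ, hμ, rfl⟩
        have hdct : Tendsto (fun n => ∫ x, f n x ∂μ.toMeasure) atTop
            (𝓝 (∫ x, g x ∂μ.toMeasure)) := by
          refine tendsto_integral_of_dominated_convergence (fun _ => C)
            (fun n => (hf n).aestronglyMeasurable) (integrable_const C)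
            (fun n => ae_of_all _ fun x => by simpa [Real.norm_eq_abs] using hC n x)
            (ae_of_all _ fun x => hft x)
        have hlim : Tendsto (fun n => ∫ x, f n x ∂μ.toMeasure + (c μ).toReal) atTop
            (𝓝 (∫ x, g x ∂μ.toMeasure + (c μ).toReal)) := hdct.add_const _
        refine ge_of_tendsto hlim (Eventually.of_forall fun n => ?_)
        exact (ciInf_le hbdd n).trans (hUle (f n) (hf n) ⟨C, hC n⟩ μ hμ)
      · exact le_ciInf fun n =>
          mono g (f n) hg (hf n) ⟨C, hgb⟩ ⟨C, hC n⟩ (hgle n)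
    rw [hEQl] at htend
    exact htend
end

section
/- On the space of bounded Borel functions on [0,1], define u₁(f) = inf { f(x) : x ∈ [0,1] } and u₂(f) = sup { a ∈ ℝ : {x : f(x) ≤ a} is of first (Baire) category }. Then u₁ and u₂ are both monotone, positively homogeneous, concave, and translation invariant; they agree on all continuous functions on [0,1]; but u₁(1_J) = 0 and u₂(1_J) = 1 where 1_J is the indicator of the irrational numbers in [0,1]. -/
open Set Topology Filter

private def MS (f : unitInterval → ℝ) : Set ℝ := {a : ℝ | IsMeagre {x | f x ≤ a}}

private lemma not_isMeagre_univ : ¬ IsMeagre (Set.univ : Set unitInterval) := by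
  intro h
  rw [IsMeagre, compl_univ] at h
  exact Set.not_nonempty_empty (dense_of_mem_residual h).nonempty

private lemma interior_singleton_eq (x : unitInterval) :
    interior ({x} : Set unitInterval) = ∅ := by
  by_contra h
  obtain ⟨z, hz⟩ := Set.nonempty_iff_ne_empty.2 h
  have hz' : z ∈ ({x} : Set unitInterval) := interior_subset hz
  rw [Set.mem_singleton_iff] at hz'
  subst hz'
  have hopen : IsOpen ({z} : Set unitInterval) := by
    have : interior ({z} : Set unitInterval) = {z} :=
      interior_subset.antisymm (Set.singleton_subset_iff.2 hz)
    rw [← this]; exact isOpen_interior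
  have hclopen : IsClopen ({z} : Set unitInterval) := ⟨isClosed_singleton, hopen⟩
  rcases isClopen_iff.1 hclopen with h1 | h1
  · exact Set.singleton_ne_empty z h1
  · obtain ⟨a, b, hab⟩ := exists_pair_ne unitInterval
    have ha : a = z := by have : a ∈ ({z} : Set unitInterval) := h1 ▸ Set.mem_univ a; exact this
    have hb : b = z := by have : b ∈ ({z} : Set unitInterval) := h1 ▸ Set.mem_univ b; exact this
    exact hab (ha.trans hb.symm)

private lemma meagre_of_countable {s : Set unitInterval} (hs : s.Countable) : IsMeagre s := by
  rw [isMeagre_iff_countable_union_isNowhereDense]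
  refine ⟨(fun x => ({x} : Set unitInterval)) '' s, ?_, hs.image _, ?_⟩
  · rintro t ⟨x, -, rfl⟩
    show interior (closure ({x} : Set unitInterval)) = ∅
    rw [closure_singleton]
    exact interior_singleton_eq x
  · intro x hx
    exact ⟨{x}, ⟨x, hx, rfl⟩, rfl⟩

private lemma MS_nonempty {f : unitInterval → ℝ} {C : ℝ} (hC : ∀ x, |f x| ≤ C) :
    (MS f).Nonempty := by
  refine ⟨-C - 1, ?_⟩
  have : {x | f x ≤ -C - 1} = (∅ : Set unitInterval) := by
    ext x
    simp only [Set.mem_setOf_eq, Set.mem_empty_iff_false, iff_false, not_le]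
    have := neg_le_of_abs_le (hC x)
    linarith
  show IsMeagre {x | f x ≤ -C - 1}
  rw [this]; exact IsMeagre.empty

private lemma MS_bddAbove {f : unitInterval → ℝ} {C : ℝ} (hC : ∀ x, |f x| ≤ C) :
    BddAbove (MS f) := by
  refine ⟨C, fun a ha => ?_⟩
  by_contra h
  push_neg at h
  have : {x | f x ≤ a} = (Set.univ : Set unitInterval) :=
    Set.eq_univ_of_forall fun x => ((le_of_abs_le (hC x)).trans h.le)
  have ha' : IsMeagre {x | f x ≤ a} := ha
  rw [this] at ha'
  exact not_isMeagre_univ ha'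

private lemma bddBelow_range {f : unitInterval → ℝ} {C : ℝ} (hC : ∀ x, |f x| ≤ C) :
    BddBelow (Set.range f) :=
  ⟨-C, by rintro y ⟨x, rfl⟩; exact neg_le_of_abs_le (hC x)⟩

/-- The two coherent utility functions u₁(f) = inf f and
u₂(f) = sup {a : {f ≤ a} is meagre} on bounded Borel functions on [0,1] are monotone,
positively homogeneous, concave and translation invariant, agree on continuous functions,
but differ on the indicator of the irrationals. -/
theorem two_extensions_on_unit_interval
    (u₁ u₂ : (unitInterval → ℝ) → ℝ)
    (hu₁ : ∀ f : unitInterval → ℝ, u₁ f = ⨅ x, f x)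
    (hu₂ : ∀ f : unitInterval → ℝ, u₂ f = sSup {a : ℝ | IsMeagre {x | f x ≤ a}}) :
    (∀ f g : unitInterval → ℝ, Measurable f → Measurable g →
      (∃ C, ∀ x, |f x| ≤ C) → (∃ C, ∀ x, |g x| ≤ C) → (∀ x, f x ≤ g x) →
      u₁ f ≤ u₁ g ∧ u₂ f ≤ u₂ g) ∧
    (∀ f : unitInterval → ℝ, Measurable f → (∃ C, ∀ x, |f x| ≤ C) → ∀ c : ℝ, 0 ≤ c →
      u₁ (fun x => c * f x) = c * u₁ f ∧ u₂ (fun x => c * f x) = c * u₂ f) ∧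
    (∀ f g : unitInterval → ℝ, Measurable f → Measurable g →
      (∃ C, ∀ x, |f x| ≤ C) → (∃ C, ∀ x, |g x| ≤ C) → ∀ t : ℝ, 0 ≤ t → t ≤ 1 →
      t * u₁ f + (1 - t) * u₁ g ≤ u₁ (fun x => t * f x + (1 - t) * g x) ∧
      t * u₂ f + (1 - t) * u₂ g ≤ u₂ (fun x => t * f x + (1 - t) * g x)) ∧
    (∀ f : unitInterval → ℝ, Measurable f → (∃ C, ∀ x, |f x| ≤ C) → ∀ a : ℝ,
      u₁ (fun x => f x + a) = u₁ f + a ∧ u₂ (fun x => f x + a) = u₂ f + a) ∧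
    (∀ f : C(unitInterval, ℝ), u₁ f = u₂ f) ∧
    u₁ (Set.indicator {x : unitInterval | Irrational (x : ℝ)} (fun _ => (1 : ℝ))) = 0 ∧
    u₂ (Set.indicator {x : unitInterval | Irrational (x : ℝ)} (fun _ => (1 : ℝ))) = 1 := by
  refine ⟨?_, ?_, ?_, ?_, ?_, ?_, ?_⟩
  · -- monotone
    rintro f g - - ⟨Cf, hCf⟩ ⟨Cg, hCg⟩ hfg
    constructor
    · rw [hu₁, hu₁]
      exact ciInf_mono (bddBelow_range hCf) hfg
    · rw [hu₂, hu₂]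
      refine csSup_le_csSup (MS_bddAbove hCg) (MS_nonempty hCf) ?_
      intro a ha
      exact ha.mono fun x hx => le_trans (hfg x) hx
  · -- positive homogeneity
    rintro f - ⟨C, hC⟩ c hc
    constructor
    · rw [hu₁, hu₁, Real.mul_iInf_of_nonneg hc]
    · rcases hc.lt_or_eq with hc' | hc'
      · rw [hu₂, hu₂]
        have himg : MS (fun x => c * f x) = (OrderIso.mulLeft₀ c hc') '' MS f := by
          ext a
          have hset : {x : unitInterval | c * f x ≤ a} = {x : unitInterval | f x ≤ a / c} := by
            ext x
            rw [Set.mem_setOf_eq, Set.mem_setOf_eq, le_div_iff₀ hc', mul_comm]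
          constructor
          · intro ha
            refine ⟨a / c, ?_, by simp [mul_div_cancel₀ _ hc'.ne']⟩
            show IsMeagre {x | f x ≤ a / c}
            rw [← hset]; exact ha
          · rintro ⟨b, hb, rfl⟩
            show IsMeagre {x : unitInterval | c * f x ≤ (OrderIso.mulLeft₀ c hc') b}
            have hb' : (OrderIso.mulLeft₀ c hc') b = c * b := rfl
            rw [hb']
            have : {x : unitInterval | c * f x ≤ c * b} = {x : unitInterval | f x ≤ b} := by
              ext x
              rw [Set.mem_setOf_eq, Set.mem_setOf_eq, mul_le_mul_iff_right₀ hc']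
            rw [this]; exact hb
        show sSup (MS fun x => c * f x) = c * sSup (MS f)
        rw [himg, ← (OrderIso.mulLeft₀ c hc').map_csSup' (MS_nonempty hC) (MS_bddAbove hC)]
        rfl
      · subst hc'
        have hset : MS (fun x => (0:ℝ) * f x) = Set.Iio 0 := by
          ext a
          simp only [MS, zero_mul, Set.mem_setOf_eq, Set.mem_Iio]
          constructor
          · intro ha
            by_contra h
            push_neg at h
            have : {x : unitInterval | (0:ℝ) ≤ a} = Set.univ := Set.eq_univ_of_forall fun _ => h
            rw [this] at ha
            exact not_isMeagre_univ ha
          · intro ha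
            have : {x : unitInterval | (0:ℝ) ≤ a} = ∅ := by
              ext x; simp [not_le.2 ha]
            rw [this]; exact IsMeagre.empty
        rw [hu₂]
        have : sSup {a : ℝ | IsMeagre {x : unitInterval | (fun x => (0:ℝ) * f x) x ≤ a}}
            = sSup (MS (fun x => (0:ℝ) * f x)) := rfl
        rw [this, hset, csSup_Iio, zero_mul]
  · -- concavity
    rintro f g - - ⟨Cf, hCf⟩ ⟨Cg, hCg⟩ t ht0 ht1
    have hCf' : 0 ≤ Cf := le_trans (abs_nonneg _) (hCf 0)
    have hCg' : 0 ≤ Cg := le_trans (abs_nonneg _) (hCg 0)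
    have hCh : ∀ x, |t * f x + (1 - t) * g x| ≤ Cf + Cg := by
      intro x
      have h1 : |t * f x| ≤ Cf := by
        rw [abs_mul, abs_of_nonneg ht0]
        calc t * |f x| ≤ 1 * Cf := by
              apply mul_le_mul ht1 (hCf x) (abs_nonneg _) zero_le_one
          _ = Cf := one_mul _
      have h2 : |(1 - t) * g x| ≤ Cg := by
        rw [abs_mul, abs_of_nonneg (by linarith)]
        calc (1 - t) * |g x| ≤ 1 * Cg := by
              apply mul_le_mul (by linarith) (hCg x) (abs_nonneg _) zero_le_one
          _ = Cg := one_mul _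
      calc |t * f x + (1 - t) * g x| ≤ |t * f x| + |(1 - t) * g x| := abs_add_le _ _
        _ ≤ Cf + Cg := add_le_add h1 h2
    constructor
    · rw [hu₁, hu₁, hu₁]
      refine le_ciInf fun x => ?_
      have h1 : (⨅ y, f y) ≤ f x := ciInf_le (bddBelow_range hCf) x
      have h2 : (⨅ y, g y) ≤ g x := ciInf_le (bddBelow_range hCg) x
      have := mul_le_mul_of_nonneg_left h1 ht0
      have := mul_le_mul_of_nonneg_left h2 (by linarith : (0:ℝ) ≤ 1 - t)
      linarith
    · rw [hu₂, hu₂, hu₂]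
      show t * sSup (MS f) + (1 - t) * sSup (MS g)
          ≤ sSup (MS fun x => t * f x + (1 - t) * g x)
      refine le_of_forall_sub_le fun ε hε => ?_
      obtain ⟨a, haS, ha⟩ := exists_lt_of_lt_csSup (MS_nonempty hCf)
        (show sSup (MS f) - ε < sSup (MS f) by linarith)
      obtain ⟨b, hbS, hb⟩ := exists_lt_of_lt_csSup (MS_nonempty hCg)
        (show sSup (MS g) - ε < sSup (MS g) by linarith)
      have hmem : t * a + (1 - t) * b ∈ MS (fun x => t * f x + (1 - t) * g x) := by
        have hsub : {x : unitInterval | t * f x + (1 - t) * g x ≤ t * a + (1 - t) * b}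
            ⊆ {x | f x ≤ a} ∪ {x | g x ≤ b} := by
          intro x hx
          simp only [Set.mem_setOf_eq] at hx
          by_contra h
          simp only [Set.mem_union, Set.mem_setOf_eq, not_or, not_le] at h
          obtain ⟨h1, h2⟩ := h
          rcases ht0.lt_or_eq with ht | ht
          · have := mul_lt_mul_of_pos_left h1 ht
            have := mul_le_mul_of_nonneg_left h2.le (by linarith : (0:ℝ) ≤ 1 - t)
            linarith
          · rw [← ht] at hx; simp at hx; linarith
        have hunion : IsMeagre ({x : unitInterval | f x ≤ a} ∪ {x | g x ≤ b}) := by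
          show ({x : unitInterval | f x ≤ a} ∪ {x | g x ≤ b})ᶜ ∈ residual _
          rw [Set.compl_union]
          exact Filter.inter_mem haS hbS
        exact hunion.mono hsub
      have hle : t * a + (1 - t) * b ≤ sSup (MS fun x => t * f x + (1 - t) * g x) :=
        le_csSup (MS_bddAbove hCh) hmem
      nlinarith [mul_le_mul_of_nonneg_left (show sSup (MS f) ≤ a + ε by linarith) ht0,
        mul_le_mul_of_nonneg_left (show sSup (MS g) ≤ b + ε by linarith)
          (by linarith : (0:ℝ) ≤ 1 - t)]
  · -- translation invariance
    rintro f - ⟨C, hC⟩ a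
    constructor
    · rw [hu₁, hu₁]
      have := (OrderIso.addRight a).map_ciInf (bddBelow_range hC)
      simp only [OrderIso.addRight_apply] at this
      exact this.symm
    · rw [hu₂, hu₂]
      have himg : MS (fun x => f x + a) = (OrderIso.addRight a) '' MS f := by
        ext b
        have hset : {x : unitInterval | f x + a ≤ b} = {x : unitInterval | f x ≤ b - a} := by
          ext x; rw [Set.mem_setOf_eq, Set.mem_setOf_eq, le_sub_iff_add_le]
        constructor
        · intro hb
          refine ⟨b - a, ?_, by simp⟩
          show IsMeagre {x | f x ≤ b - a}
          rw [← hset]; exact hb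
        · rintro ⟨c, hc, rfl⟩
          show IsMeagre {x : unitInterval | f x + a ≤ (OrderIso.addRight a) c}
          simp only [OrderIso.addRight_apply]
          have : {x : unitInterval | f x + a ≤ c + a} = {x : unitInterval | f x ≤ c} := by
            ext x; rw [Set.mem_setOf_eq, Set.mem_setOf_eq, add_le_add_iff_right]
          rw [this]; exact hc
      show sSup (MS fun x => f x + a) = sSup (MS f) + a
      rw [himg, ← (OrderIso.addRight a).map_csSup' (MS_nonempty hC) (MS_bddAbove hC)]
      simp
  · -- agrees on continuous functions
    intro f
    obtain ⟨x₀, -, hx₀'⟩ := isCompact_univ.exists_isMinOn (Set.univ_nonempty)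
      f.continuous.continuousOn
    have hx₀ : ∀ x : unitInterval, f x₀ ≤ f x := fun x => isMinOn_iff.1 hx₀' x trivial
    obtain ⟨x₁, -, hx₁'⟩ := isCompact_univ.exists_isMaxOn (Set.univ_nonempty)
      (continuous_abs.comp f.continuous).continuousOn
    have hC : ∀ x, |f x| ≤ |f x₁| := fun x => isMaxOn_iff.1 hx₁' x trivial
    set m := ⨅ x, f x with hm
    have hbdd : BddBelow (Set.range f) := bddBelow_range hC
    have hm1 : m ≤ f x₀ := ciInf_le hbdd x₀
    have hm2 : f x₀ ≤ m := le_ciInf fun x => hx₀ x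
    have hmx : m = f x₀ := le_antisymm hm1 hm2
    have hIio : Set.Iio m ⊆ MS f := by
      intro a ha
      have : {x : unitInterval | f x ≤ a} = ∅ := by
        ext x
        simp only [Set.mem_setOf_eq, Set.mem_empty_iff_false, iff_false, not_le]
        exact lt_of_lt_of_le ha (hmx.le.trans (hx₀ x))
      show IsMeagre {x | f x ≤ a}
      rw [this]; exact IsMeagre.empty
    rw [hu₁, hu₂]
    show m = sSup (MS f)
    refine le_antisymm ?_ (csSup_le ⟨m - 1, hIio (by simp)⟩ ?_)
    · have h1 : sSup (Set.Iio m) ≤ sSup (MS f) :=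
        csSup_le_csSup (MS_bddAbove hC) ⟨m - 1, by simp⟩ hIio
      rwa [csSup_Iio] at h1
    · intro a ha
      by_contra h
      push_neg at h
      set U := {x : unitInterval | f x < a} with hU
      have hUopen : IsOpen U := isOpen_lt f.continuous continuous_const
      have hUne : U.Nonempty := ⟨x₀, by simp only [hU, Set.mem_setOf_eq]; rw [← hmx]; exact h⟩
      have hUmeagre : IsMeagre U := ha.mono fun x hx => show f x ≤ a from le_of_lt hx
      have hdense : Dense (Uᶜ : Set unitInterval) := dense_of_mem_residual hUmeagre
      obtain ⟨z, hz1, hz2⟩ := hdense.inter_open_nonempty U hUopen hUne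
      exact hz2 hz1
  · -- u₁ on indicator
    rw [hu₁]
    have h0 : (0 : unitInterval) ∉ {x : unitInterval | Irrational (x : ℝ)} := by
      simp only [Set.mem_setOf_eq]
      show ¬ Irrational ((0 : unitInterval) : ℝ)
      have : ((0 : unitInterval) : ℝ) = 0 := rfl
      rw [this]
      exact not_irrational_zero
    refine le_antisymm ?_ ?_
    · have := ciInf_le (f := Set.indicator {x : unitInterval | Irrational (x : ℝ)}
        (fun _ => (1 : ℝ)))
        ⟨0, by rintro y ⟨x, rfl⟩; exact Set.indicator_nonneg (fun _ _ => zero_le_one) x⟩ 0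
      rwa [Set.indicator_of_notMem h0] at this
    · exact le_ciInf fun x => Set.indicator_nonneg (fun _ _ => zero_le_one) x
  · -- u₂ on indicator
    rw [hu₂]
    set h : unitInterval → ℝ :=
      Set.indicator {x : unitInterval | Irrational (x : ℝ)} (fun _ => (1 : ℝ)) with hh
    have hset : MS h = Set.Iio 1 := by
      ext a
      simp only [MS, Set.mem_setOf_eq, Set.mem_Iio]
      constructor
      · intro ha
        by_contra hle
        push_neg at hle
        have : {x : unitInterval | h x ≤ a} = Set.univ := by
          refine Set.eq_univ_of_forall fun x => ?_
          have h1 : h x ≤ 1 := by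
            by_cases hx : Irrational (x : ℝ)
            · rw [hh, Set.indicator_of_mem (show x ∈ {x : unitInterval | Irrational (x : ℝ)} from hx)]
            · rw [hh, Set.indicator_of_notMem (show x ∉ {x : unitInterval | Irrational (x : ℝ)} from hx)]; exact zero_le_one
          exact h1.trans hle
        rw [this] at ha
        exact not_isMeagre_univ ha
      · intro ha
        rcases lt_or_ge a 0 with h0 | h0
        · have : {x : unitInterval | h x ≤ a} = ∅ := by
            ext x
            simp only [Set.mem_setOf_eq, Set.mem_empty_iff_false, iff_false, not_le]
            exact lt_of_lt_of_le h0 (Set.indicator_nonneg (fun _ _ => zero_le_one) x)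
          rw [this]; exact IsMeagre.empty
        · have heq : {x : unitInterval | h x ≤ a} = {x : unitInterval | ¬ Irrational (x : ℝ)} := by
            ext x
            simp only [Set.mem_setOf_eq]
            by_cases hx : Irrational (x : ℝ)
            · rw [hh, Set.indicator_of_mem (show x ∈ {x : unitInterval | Irrational (x : ℝ)} from hx)]
              exact iff_of_false (not_le.2 ha) (not_not_intro hx)
            · rw [hh, Set.indicator_of_notMem (show x ∉ {x : unitInterval | Irrational (x : ℝ)} from hx)]
              exact iff_of_true h0 hx
          rw [heq]
          refine meagre_of_countable ?_
          have : {x : unitInterval | ¬ Irrational (x : ℝ)}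
              = Subtype.val ⁻¹' (Set.range ((↑) : ℚ → ℝ)) := by
            ext x
            simp only [Set.mem_setOf_eq, Set.mem_preimage, Irrational, not_not]
          rw [this]
          exact (Set.countable_range _).preimage Subtype.val_injective
    show sSup (MS h) = 1
    rw [hset, csSup_Iio]
end

section
/- Let X be a Polish space and u : C(X) → ℝ (all continuous real-valued functions, finite values everywhere) satisfy: u is concave and positively homogeneous, u(f+a) = u(f)+a for constants a, and u is monotone (f ≤ g implies u(f) ≤ u(g)). Then u is continuous along decreasing sequences: if f_n ↓ f pointwise with f_n, f ∈ C(X), then u(f_n) ↓ u(f). -/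
open Set Topology Filter

/-- On C(X), X Polish, a finite-valued concave, positively homogeneous, monetary, monotone
functional is automatically continuous along pointwise decreasing sequences. -/
theorem automatic_fatou_on_CX
    {X : Type*} [TopologicalSpace X] [PolishSpace X]
    (u : C(X, ℝ) → ℝ)
    (hconc : ∀ f g : C(X, ℝ), ∀ t : ℝ, 0 ≤ t → t ≤ 1 →
      t * u f + (1 - t) * u g ≤ u (t • f + (1 - t) • g))
    (hhom : ∀ (c : ℝ), 0 ≤ c → ∀ f : C(X, ℝ), u (c • f) = c * u f)
    (hcash : ∀ f : C(X, ℝ), ∀ a : ℝ, u (f + ContinuousMap.const X a) = u f + a)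
    (hmono : ∀ f g : C(X, ℝ), (∀ x, f x ≤ g x) → u f ≤ u g) :
    ∀ (f : ℕ → C(X, ℝ)) (g : C(X, ℝ)),
      (∀ x, Antitone fun n => f n x) →
      (∀ x, Tendsto (fun n => f n x) atTop (nhds (g x))) →
      Antitone (fun n => u (f n)) ∧ Tendsto (fun n => u (f n)) atTop (nhds (u g)) := by
  intro f g hanti hlim
  have hge : ∀ n x, g x ≤ f n x := fun n x =>
    le_of_tendsto (hlim x) (eventually_atTop.2 ⟨n, fun m hm => hanti x hm⟩)
  have hA : Antitone fun n => u (f n) := fun m n hmn => hmono _ _ fun x => hanti x hmn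
  refine ⟨hA, ?_⟩
  have hu0 : u 0 = 0 := by
    have h := hhom 0 le_rfl 0
    simpa using h
  have hsuper : ∀ a b : C(X, ℝ), u a + u b ≤ u (a + b) := by
    intro a b
    have h := hconc ((2 : ℝ) • a) ((2 : ℝ) • b) (1 / 2) (by norm_num) (by norm_num)
    rw [hhom 2 (by norm_num), hhom 2 (by norm_num)] at h
    have e : (1 / 2 : ℝ) • ((2 : ℝ) • a) + (1 - 1 / 2 : ℝ) • ((2 : ℝ) • b) = a + b := by
      rw [smul_smul, smul_smul]; norm_num
    rw [e] at h
    linarith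
  -- key quantitative bound
  have key : ∀ δ : ℝ, 0 < δ → ∃ C : ℝ, 0 ≤ C ∧
      ∀ n : ℕ, 1 ≤ n → u (f n) ≤ u g + δ + C / n := by
    intro δ hδ
    letI := TopologicalSpace.upgradeIsCompletelyMetrizable X
    set F : ℕ → Set X := fun n => {x | δ ≤ f n x - g x} with hF
    have hFc : ∀ n, IsClosed (F n) := fun n =>
      isClosed_le continuous_const ((f n).continuous.sub g.continuous)
    have hFanti : ∀ m n : ℕ, m ≤ n → F n ⊆ F m := by
      intro m n hmn x hx
      simp only [hF, mem_setOf_eq] at hx ⊢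
      have := hanti x hmn
      linarith
    have hnotall : ∀ x, ∃ N, x ∉ F N := by
      intro x
      have h0 : Tendsto (fun n => f n x - g x) atTop (nhds 0) := by
        simpa using (hlim x).sub (tendsto_const_nhds (x := g x))
      obtain ⟨N, hN⟩ := (h0.eventually_lt_const hδ).exists
      exact ⟨N, by simp only [hF, mem_setOf_eq]; linarith⟩
    obtain ⟨w, hw⟩ := exists_continuous_forall_mem_convex_of_local
      (t := fun x => {r : ℝ | 0 ≤ r ∧ ∀ n : ℕ, x ∈ F n → (n : ℝ) ≤ r})
      (fun x => by
        intro r hr s hs a b ha hb hab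
        simp only [smul_eq_mul, mem_setOf_eq] at *
        refine ⟨by nlinarith [hr.1, hs.1], fun n hn => ?_⟩
        nlinarith [hr.2 n hn, hs.2 n hn, mul_le_mul_of_nonneg_left (hr.2 n hn) ha,
          mul_le_mul_of_nonneg_left (hs.2 n hn) hb])
      (fun x => by
        obtain ⟨N, hN⟩ := hnotall x
        refine ⟨(F N)ᶜ, ((hFc N).isOpen_compl).mem_nhds hN, fun _ => (N : ℝ),
          continuousOn_const, fun y hy => ⟨Nat.cast_nonneg N, fun n hn => ?_⟩⟩
        rcases le_or_gt n N with h | h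
        · show (n:ℝ) ≤ (N:ℝ); exact_mod_cast h
        · exact absurd (hFanti N n h.le hn) hy)
    set φ : C(X, ℝ) := w * (f 0 - g + 1) with hφ
    have hφx : ∀ x, φ x = w x * (f 0 x - g x + 1) := fun x => by simp [hφ]
    have hφ0 : ∀ x, 0 ≤ φ x := by
      intro x
      rw [hφx]
      have h1 := (hw x).1
      have h2 := hge 0 x
      nlinarith
    refine ⟨-u (-φ), ?_, ?_⟩
    · have hneg : u (-φ) ≤ u 0 := hmono _ _ (fun x => by
        simpa using hφ0 x)
      rw [hu0] at hneg
      linarith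
    · intro n hn
      have hnpos : (0 : ℝ) < n := by exact_mod_cast hn
      -- pointwise bound: f n ≤ g + δ + (1/n) • φ
      have hpt : ∀ x, f n x ≤ (g + ContinuousMap.const X δ + (1 / (n : ℝ)) • φ) x := by
        intro x
        have hφnn : 0 ≤ (1 / (n : ℝ)) * φ x := mul_nonneg (by positivity) (hφ0 x)
        simp only [ContinuousMap.add_apply, ContinuousMap.const_apply,
          ContinuousMap.smul_apply, smul_eq_mul]
        by_cases hx : δ ≤ f n x - g x
        · have hwx : (n : ℝ) ≤ w x := (hw x).2 n hx
          have hfn0 : f n x ≤ f 0 x := hanti x (Nat.zero_le n)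
          have hg0 : g x ≤ f 0 x := hge 0 x
          have hkey : (n : ℝ) * (f n x - g x) ≤ w x * (f 0 x - g x + 1) :=
            mul_le_mul hwx (by linarith) (by linarith [hge n x])
              (le_trans (Nat.cast_nonneg n) hwx)
          have e : (1 / (n : ℝ)) * ((n : ℝ) * (f n x - g x)) = f n x - g x := by
            field_simp
          have := mul_le_mul_of_nonneg_left hkey (by positivity : (0:ℝ) ≤ 1 / (n : ℝ))
          rw [e] at this
          rw [hφx]
          linarith
        · push_neg at hx
          linarith
      have hle : u (f n) ≤ u (g + ContinuousMap.const X δ + (1 / (n : ℝ)) • φ) :=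
        hmono _ _ hpt
      have h2 : u (g + ContinuousMap.const X δ + (1 / (n : ℝ)) • φ)
          + u (-((1 / (n : ℝ)) • φ)) ≤ u (g + ContinuousMap.const X δ) := by
        have h := hsuper (g + ContinuousMap.const X δ + (1 / (n : ℝ)) • φ)
          (-((1 / (n : ℝ)) • φ))
        simpa using h
      have h3 : u (-((1 / (n : ℝ)) • φ)) = (1 / (n : ℝ)) * u (-φ) := by
        rw [show -((1 / (n : ℝ)) • φ) = (1 / (n : ℝ)) • (-φ) from (smul_neg _ _).symm]
        exact hhom _ (by positivity) _
      have h4 : u (g + ContinuousMap.const X δ) = u g + δ := hcash g δ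
      have e2 : (-u (-φ)) / (n : ℝ) = -((1 / (n : ℝ)) * u (-φ)) := by ring
      rw [e2]
      linarith
  -- conclude
  rw [Metric.tendsto_atTop]
  intro ε hε
  obtain ⟨C, hC0, hkey⟩ := key (ε / 2) (by linarith)
  obtain ⟨N, hN⟩ := exists_nat_gt (C / (ε / 2))
  refine ⟨max N 1, fun n hn => ?_⟩
  have hn1 : 1 ≤ n := le_trans (le_max_right _ _) hn
  have hnN : N ≤ n := le_trans (le_max_left _ _) hn
  have hnpos : (0 : ℝ) < n := by exact_mod_cast hn1
  have hb : u (f n) ≤ u g + ε / 2 + C / n := hkey n hn1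
  have hlow : u g ≤ u (f n) := hmono _ _ (hge n)
  have hCN : C < (ε / 2) * N := by
    rw [div_lt_iff₀ (by linarith : (0:ℝ) < ε / 2)] at hN
    linarith
  have hCn : C / n < ε / 2 := by
    rw [div_lt_iff₀ hnpos]
    have hcast : (N : ℝ) ≤ n := by exact_mod_cast hnN
    nlinarith
  rw [Real.dist_eq, abs_of_nonneg (by linarith)]
  linarith
end

section
/- Let X be a metric space, f and g_n continuous with g_n ≥ f, and suppose that for every compact set C ⊆ X there is n₀ with g_n = f on C for all n ≥ n₀ (stationary convergence on compacts). Then F(x) = inf { (n+1)f(x) − n g_n(x) : n ≥ 1 } defines a continuous real-valued function on X. -/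
open Set Topology Filter

/-!
Every compact set `K` sees only finitely many of the functions `(n + 1) f - n gₙ`: once `gₙ = f`
on `K`, the `n`-th function is `f` there, the same as for the first such index. On `K` the
infimum is therefore a finite minimum of continuous functions, and continuity on every compact
set suffices in a compactly generated (e.g. metric) space.
-/

theorem CompactlyCoherentSpace.continuous_of_forall_isCompact_exists_eqOn
    {X Y : Type*} [TopologicalSpace X] [CompactlyCoherentSpace X] [TopologicalSpace Y]
    {F : X → Y} (h : ∀ K : Set X, IsCompact K → ∃ G : X → Y, Continuous G ∧ EqOn F G K) :
    Continuous F := by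
  rw [CompactlyCoherentSpace.isCoherentWith.continuous_iff]
  intro K hK
  obtain ⟨G, hG, hFG⟩ := h K hK
  exact hG.continuousOn.congr hFG

theorem ciInf_one_le_eq_finset_inf'_Icc {α : Type*} [ConditionallyCompleteLinearOrder α]
    (a : ℕ → α) {N : ℕ} (hN : 1 ≤ N) (ha : ∀ n ≥ N, a N ≤ a n) :
    ⨅ n : {n : ℕ // 1 ≤ n}, a n = (Finset.Icc 1 N).inf' (Finset.nonempty_Icc.2 hN) a := by
  obtain ⟨k, hk, hak⟩ := (Finset.Icc 1 N).exists_mem_eq_inf' (Finset.nonempty_Icc.2 hN) a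
  set m := (Finset.Icc 1 N).inf' (Finset.nonempty_Icc.2 hN) a
  have hle : ∀ n : {n : ℕ // 1 ≤ n}, m ≤ a n := by
    rintro ⟨n, hn⟩
    rcases le_total n N with hnN | hNn
    · exact Finset.inf'_le a (Finset.mem_Icc.2 ⟨hn, hnN⟩)
    · exact (Finset.inf'_le a (Finset.right_mem_Icc.2 hN)).trans (ha n hNn)
  refine le_antisymm ?_ (le_ciInf hle)
  rw [hak]
  exact ciInf_le ⟨m, forall_mem_range.2 hle⟩ ⟨k, (Finset.mem_Icc.1 hk).1⟩

theorem inf_of_stationary_sequence_continuous_general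
    {X : Type*} [MetricSpace X]
    (f : X → ℝ) (hf : Continuous f)
    (g : ℕ → X → ℝ) (hg : ∀ n, Continuous (g n))
    (hstat : ∀ C : Set X, IsCompact C → ∃ n₀, ∀ n ≥ n₀, ∀ x ∈ C, g n x = f x)
    (F : X → ℝ)
    (hF : ∀ x, F x = ⨅ n : {n : ℕ // 1 ≤ n}, (((n : ℕ) + 1) * f x - (n : ℕ) * g n x)) :
    Continuous F := by
  set φ : ℕ → X → ℝ := fun n y => ((n : ℝ) + 1) * f y - n * g n y
  refine CompactlyCoherentSpace.continuous_of_forall_isCompact_exists_eqOn fun K hK => ?_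
  obtain ⟨n₀, hn₀⟩ := hstat K hK
  have hφ : ∀ n ≥ n₀, ∀ y ∈ K, φ n y = f y := fun n hn y hy => by
    simp only [φ, hn₀ n hn y hy]; ring
  have hN : 1 ≤ max n₀ 1 := le_max_right _ _
  refine ⟨fun y => (Finset.Icc 1 (max n₀ 1)).inf' (Finset.nonempty_Icc.2 hN) (φ · y),
    Continuous.finset_inf'_apply _ fun n _ => by fun_prop, fun y hy => ?_⟩
  rw [hF]
  refine ciInf_one_le_eq_finset_inf'_Icc (φ · y) hN fun n hn => ?_
  rw [hφ n (le_of_max_le_left hn) y hy, hφ _ (le_max_left _ _) y hy]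

/-- If g_n ≥ f (all continuous) and on every compact set g_n coincides with f eventually,
then F(x) = inf_{n ≥ 1} ((n+1) f(x) - n g_n(x)) is a continuous real-valued function. -/
theorem inf_of_stationary_sequence_continuous
    {X : Type*} [MetricSpace X]
    (f : X → ℝ) (hf : Continuous f)
    (g : ℕ → X → ℝ) (hg : ∀ n, Continuous (g n))
    (hge : ∀ n x, f x ≤ g n x)
    (hstat : ∀ C : Set X, IsCompact C → ∃ n₀, ∀ n ≥ n₀, ∀ x ∈ C, g n x = f x)
    (F : X → ℝ)
    (hF : ∀ x, F x = ⨅ n : {n : ℕ // 1 ≤ n}, (((n : ℕ) + 1) * f x - (n : ℕ) * g n x)) :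
    Continuous F :=
  inf_of_stationary_sequence_continuous_general f hf g hg hstat F hF
end

section
/- Let X be a Polish space with metric d ≤ 1 and (x_n) a sequence of pairwise distinct points with no convergent subsequence. Then there exist continuous functions ψ_n : X → [0,1] with ψ_n(x_n) = 1, whose supports are contained in pairwise disjoint closed sets forming a locally finite family, such that for every sequence of reals (a_n) the sum Σ_n a_n ψ_n converges pointwise to a continuous function on X. -/
open Set Topology Filter

/-- Given a sequence of distinct points with no convergent subsequence in a Polish space
with metric ≤ 1, there are continuous bump functions ψ_n with ψ_n(x_n) = 1, supports in
pairwise disjoint closed sets forming a locally finite family, such that every series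
Σ a_n ψ_n converges pointwise to a continuous function. -/
theorem bump_functions_along_divergent_sequence
    {X : Type*} [MetricSpace X] [TopologicalSpace.SeparableSpace X] [CompleteSpace X]
    (hd1 : ∀ a b : X, dist a b ≤ 1)
    (x : ℕ → X) (hinj : Function.Injective x)
    (hnoconv : ¬ ∃ (φ : ℕ → ℕ) (y : X), StrictMono φ ∧
      Tendsto (fun k => x (φ k)) atTop (nhds y)) :
    ∃ ψ : ℕ → C(X, ℝ),
      (∀ n y, ψ n y ∈ Set.Icc (0 : ℝ) 1) ∧
      (∀ n, ψ n (x n) = 1) ∧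
      Pairwise (fun n m => Disjoint (closure {y | ψ n y ≠ 0}) (closure {y | ψ m y ≠ 0})) ∧
      LocallyFinite (fun n => closure {y | ψ n y ≠ 0}) ∧
      ∀ a : ℕ → ℝ, ∃ h : C(X, ℝ), ∀ y,
        Tendsto (fun N => ∑ n ∈ Finset.range N, a n * ψ n y) atTop (nhds (h y)) := by
  have hto0 : Tendsto (fun j : ℕ => (1 : ℝ) / (j + 1)) atTop (nhds 0) :=
    tendsto_one_div_add_atTop_nhds_zero_nat
  -- Step 1: separation radii
  have hsep : ∀ n : ℕ, ∃ ε : ℝ, 0 < ε ∧ ∀ m, m ≠ n → 3 * ε ≤ dist (x n) (x m) := by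
    intro n
    by_contra hcon
    push_neg at hcon
    have hinf : ∀ ε : ℝ, 0 < ε → {m | m ≠ n ∧ dist (x n) (x m) < ε}.Infinite := by
      intro ε hε
      by_contra hni
      rw [Set.not_infinite] at hni
      have hfin := hni
      have hne : {m | m ≠ n ∧ dist (x n) (x m) < ε}.Nonempty := by
        obtain ⟨m, hm, hd⟩ := hcon (ε / 3) (by linarith)
        exact ⟨m, hm, by linarith⟩
      obtain ⟨m₀, hm₀, hmin⟩ := hfin.toFinset.exists_min_image
        (fun m => dist (x n) (x m)) (by simpa [Set.Finite.toFinset_nonempty] using hne)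
      rw [Set.Finite.mem_toFinset] at hm₀
      have hδ : 0 < dist (x n) (x m₀) := dist_pos.2 fun h => hm₀.1 (hinj h.symm)
      obtain ⟨m, hm, hd⟩ := hcon (dist (x n) (x m₀) / 3) (by linarith)
      have hmem : m ∈ hfin.toFinset := by
        rw [Set.Finite.mem_toFinset]
        exact ⟨hm, by linarith [hm₀.2]⟩
      have := hmin m hmem
      linarith
    have hfreq : ∀ j : ℕ, ∃ᶠ m in atTop, m ≠ n ∧ dist (x n) (x m) < 1 / (j + 1) := by
      intro j
      have := (hinf (1 / (j + 1)) (by positivity)).frequently_cofinite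
      rwa [Nat.cofinite_eq_atTop] at this
    obtain ⟨φ, hφ, hP⟩ := extraction_forall_of_frequently hfreq
    refine hnoconv ⟨φ, x n, hφ, ?_⟩
    rw [tendsto_iff_dist_tendsto_zero]
    refine squeeze_zero (fun j => dist_nonneg) (fun j => ?_) hto0
    rw [dist_comm]
    exact le_of_lt (hP j).2
  choose r hrpos hr using hsep
  -- Step 2: bump functions
  set ψ : ℕ → C(X, ℝ) := fun n =>
    ⟨fun z => max 0 (1 - dist z (x n) / r n), by fun_prop⟩ with hψdef
  have hψval : ∀ n z, ψ n z = max 0 (1 - dist z (x n) / r n) := fun n z => rfl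
  have hsupp : ∀ n, {y | ψ n y ≠ 0} ⊆ Metric.ball (x n) (r n) := by
    intro n y hy
    simp only [hψval, ne_eq, Set.mem_setOf_eq] at hy
    have h1 : 0 < 1 - dist y (x n) / r n := by
      by_contra h
      push_neg at h
      exact hy (max_eq_left h)
    have := (div_lt_one (hrpos n)).1 (sub_pos.1 h1)
    simpa [Metric.mem_ball] using this
  have hclosure : ∀ n, closure {y | ψ n y ≠ 0} ⊆ Metric.closedBall (x n) (r n) :=
    fun n => closure_minimal ((hsupp n).trans Metric.ball_subset_closedBall)
      Metric.isClosed_closedBall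
  have hdisj : ∀ n m : ℕ, n ≠ m →
      Disjoint (Metric.closedBall (x n) (r n)) (Metric.closedBall (x m) (r m)) := by
    intro n m hnm
    rw [Set.disjoint_left]
    intro z hzn hzm
    rw [Metric.mem_closedBall] at hzn hzm
    have h1 : 3 * r m ≤ dist (x m) (x n) := hr m n hnm
    have h2 : 3 * r n ≤ dist (x n) (x m) := hr n m (Ne.symm hnm)
    have hcm : dist (x m) (x n) = dist (x n) (x m) := dist_comm _ _
    have htri : dist (x n) (x m) ≤ dist z (x n) + dist z (x m) := by
      rw [dist_comm z (x n)]; exact dist_triangle _ _ _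
    have := hrpos n
    have := hrpos m
    linarith
  -- Step 3: local finiteness of closed balls
  have hlf : LocallyFinite (fun n => Metric.closedBall (x n) (r n)) := by
    intro y
    by_contra hcon
    push_neg at hcon
    have hfreq : ∀ j : ℕ, ∃ᶠ n in atTop, dist y (x n) < r n + 1 / (j + 1) := by
      intro j
      have hinf' : {n | (Metric.closedBall (x n) (r n) ∩
          Metric.ball y (1 / (j + 1))).Nonempty}.Infinite :=
        hcon (Metric.ball y (1 / (j + 1))) (Metric.ball_mem_nhds y (by positivity))
      have hsub : {n | (Metric.closedBall (x n) (r n) ∩ Metric.ball y (1 / (j + 1))).Nonempty}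
          ⊆ {n | dist y (x n) < r n + 1 / (j + 1)} := by
        rintro n ⟨z, hz1, hz2⟩
        rw [Metric.mem_closedBall] at hz1
        rw [Metric.mem_ball] at hz2
        have : dist y (x n) ≤ dist y z + dist z (x n) := dist_triangle _ _ _
        rw [dist_comm y z] at this
        simp only [Set.mem_setOf_eq]
        linarith
      have := (hinf'.mono hsub).frequently_cofinite
      rwa [Nat.cofinite_eq_atTop] at this
    obtain ⟨φ, hφ, hP⟩ := extraction_forall_of_frequently hfreq
    have hrb : ∀ j : ℕ, r (φ j) ≤ 4 * (1 / (j + 1)) := by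
      intro j
      have hne : φ j ≠ φ (j + 1) := fun h => absurd (hφ.injective h) (by omega)
      have h1 : 3 * r (φ j) ≤ dist (x (φ j)) (x (φ (j + 1))) := hr _ _ hne.symm
      have h2 : 3 * r (φ (j + 1)) ≤ dist (x (φ (j + 1))) (x (φ j)) := hr _ _ hne
      have hcm : dist (x (φ (j + 1))) (x (φ j)) = dist (x (φ j)) (x (φ (j + 1))) :=
        dist_comm _ _
      have htri : dist (x (φ j)) (x (φ (j + 1))) ≤
          dist y (x (φ j)) + dist y (x (φ (j + 1))) := by
        rw [dist_comm y (x (φ j))]; exact dist_triangle _ _ _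
      have hb1 := hP j
      have hb2 := hP (j + 1)
      have hmono : (1 : ℝ) / (↑(j + 1) + 1) ≤ 1 / (↑j + 1) := by
        apply one_div_le_one_div_of_le
        · positivity
        · push_cast; linarith
      have := hrpos (φ (j + 1))
      push_cast at hb2 hmono ⊢
      linarith
    refine hnoconv ⟨φ, y, hφ, ?_⟩
    rw [tendsto_iff_dist_tendsto_zero]
    have h5 : Tendsto (fun j : ℕ => 5 * (1 / (↑j + 1) : ℝ)) atTop (nhds 0) := by
      simpa using hto0.const_mul 5
    refine squeeze_zero (fun j => dist_nonneg) (fun j => ?_) h5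
    have := hP j
    have := hrb j
    rw [dist_comm]
    linarith
  have hlfψ : LocallyFinite (fun n => closure {y | ψ n y ≠ 0}) :=
    hlf.subset hclosure
  -- at each point at most one ψ is nonzero
  have huniq : ∀ y : X, ∀ n m : ℕ, ψ n y ≠ 0 → ψ m y ≠ 0 → n = m := by
    intro y n m hn hm
    by_contra hnm
    exact Set.disjoint_left.1 (hdisj n m hnm)
      (Metric.ball_subset_closedBall (hsupp n hn))
      (Metric.ball_subset_closedBall (hsupp m hm))
  refine ⟨ψ, ?_, ?_, ?_, hlfψ, ?_⟩
  · intro n y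
    constructor
    · exact le_max_left _ _
    · rw [hψval]
      refine max_le (by norm_num) ?_
      have : 0 ≤ dist y (x n) / r n := div_nonneg dist_nonneg (hrpos n).le
      linarith
  · intro n
    rw [hψval]
    simp [dist_self]
  · intro n m hnm
    exact (hdisj n m hnm).mono (hclosure n) (hclosure m)
  · intro a
    have hcont : Continuous fun z => ∑ᶠ n, a n * ψ n z := by
      apply continuous_finsum
      · exact fun n => continuous_const.mul (ψ n).continuous
      · apply hlf.subset
        intro n z hz
        have hψnz : ψ n z ≠ 0 := by
          intro h
          simp [Function.mem_support, h] at hz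
        exact Metric.ball_subset_closedBall (hsupp n hψnz)
    refine ⟨⟨fun z => ∑ᶠ n, a n * ψ n z, hcont⟩, fun y => ?_⟩
    have hN₀ : ∃ N₀ : ℕ, ∀ n, N₀ ≤ n → a n * ψ n y = 0 := by
      by_cases hex : ∃ n₀, ψ n₀ y ≠ 0
      · obtain ⟨n₀, h0⟩ := hex
        refine ⟨n₀ + 1, fun n hn => ?_⟩
        have : ψ n y = 0 := by
          by_contra h'
          have := huniq y n n₀ h' h0
          omega
        simp [this]
      · push_neg at hex
        exact ⟨0, fun n _ => by simp [hex n]⟩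
    obtain ⟨N₀, hN₀⟩ := hN₀
    have hval : ∑ᶠ n, a n * ψ n y = ∑ n ∈ Finset.range N₀, a n * ψ n y := by
      apply finsum_eq_sum_of_support_subset
      intro n hn
      simp only [Finset.coe_range, Set.mem_Iio]
      by_contra h
      exact hn (hN₀ n (by omega))
    have key : ∀ N, N₀ ≤ N →
        ∑ n ∈ Finset.range N, a n * ψ n y = ∑ n ∈ Finset.range N₀, a n * ψ n y := by
      intro N hN
      symm
      apply Finset.sum_subset (Finset.range_subset_range.2 hN)
      intro n hn hnot
      rw [Finset.mem_range] at hn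
      rw [Finset.mem_range] at hnot
      exact hN₀ n (by omega)
    have : (fun y => ∑ᶠ n, a n * ψ n y) y = ∑ n ∈ Finset.range N₀, a n * ψ n y := hval
    simp only [ContinuousMap.coe_mk]
    rw [hval]
    exact tendsto_atTop_of_eventually_const (i₀ := N₀) key
end

section
/- Let X be a non-compact Polish space and u : C(X) → ℝ a finite-valued function that is concave, positively homogeneous, translation invariant (u(f+a)=u(f)+a for constants), and monotone. Then there exist a compact set L ⊆ X and a convex set S of Borel probability measures on X, each with support contained in L, such that u(f) = inf { ∫ f dμ : μ ∈ S } for all f ∈ C(X). -/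
open Set Topology Filter MeasureTheory
open scoped ENNReal NNReal

section RMK

variable {Y : Type*} [MetricSpace Y] [CompactSpace Y] [MeasurableSpace Y] [BorelSpace Y]

namespace RMKaux

/-- The set of values of ψ on admissible functions for a compact K. -/
def rcSet (ψ : C(Y, ℝ) →ₗ[ℝ] ℝ) (K : Set Y) : Set ℝ :=
  ψ '' {f : C(Y, ℝ) | (∀ x, 0 ≤ f x) ∧ ∀ x ∈ K, 1 ≤ f x}

noncomputable def rc (ψ : C(Y, ℝ) →ₗ[ℝ] ℝ) (K : Set Y) : ℝ := sInf (rcSet ψ K)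

variable (ψ : C(Y, ℝ) →ₗ[ℝ] ℝ)

set_option linter.unusedSectionVars false

theorem psi_mono (hpos : ∀ f : C(Y, ℝ), (∀ x, 0 ≤ f x) → 0 ≤ ψ f) {f g : C(Y, ℝ)} (h : ∀ x, f x ≤ g x) : ψ f ≤ ψ g := by
  have : 0 ≤ ψ (g - f) := hpos _ (fun x => by simpa using h x)
  have := (map_sub ψ g f) ▸ this
  linarith

theorem rcSet_nonempty (K : Set Y) : (rcSet ψ K).Nonempty :=
  ⟨ψ 1, ⟨1, ⟨fun x => by norm_num, fun x _ => by norm_num⟩, rfl⟩⟩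

theorem rcSet_bddBelow (hpos : ∀ f : C(Y, ℝ), (∀ x, 0 ≤ f x) → 0 ≤ ψ f) (K : Set Y) : BddBelow (rcSet ψ K) := by
  refine ⟨0, fun r hr => ?_⟩
  obtain ⟨f, ⟨hf0, _⟩, rfl⟩ := hr
  exact hpos f hf0

theorem rc_nonneg (hpos : ∀ f : C(Y, ℝ), (∀ x, 0 ≤ f x) → 0 ≤ ψ f) (K : Set Y) : 0 ≤ rc ψ K := by
  apply Real.sInf_nonneg
  rintro r ⟨f, ⟨hf0, _⟩, rfl⟩
  exact hpos f hf0

theorem rc_le (hpos : ∀ f : C(Y, ℝ), (∀ x, 0 ≤ f x) → 0 ≤ ψ f) (K : Set Y) {f : C(Y, ℝ)} (hf0 : ∀ x, 0 ≤ f x) (hf1 : ∀ x ∈ K, 1 ≤ f x) :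
    rc ψ K ≤ ψ f :=
  csInf_le (rcSet_bddBelow ψ hpos K) ⟨f, ⟨hf0, hf1⟩, rfl⟩

theorem le_rc {K : Set Y} {c : ℝ}
    (h : ∀ f : C(Y, ℝ), (∀ x, 0 ≤ f x) → (∀ x ∈ K, 1 ≤ f x) → c ≤ ψ f) : c ≤ rc ψ K := by
  apply le_csInf (rcSet_nonempty ψ K)
  rintro r ⟨f, ⟨hf0, hf1⟩, rfl⟩
  exact h f hf0 hf1

theorem rc_mono (hpos : ∀ f : C(Y, ℝ), (∀ x, 0 ≤ f x) → 0 ≤ ψ f) {K₁ K₂ : Set Y} (h : K₁ ⊆ K₂) : rc ψ K₁ ≤ rc ψ K₂ :=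
  csInf_le_csInf (rcSet_bddBelow ψ hpos K₁) (rcSet_nonempty ψ K₂)
    (fun r ⟨f, ⟨hf0, hf1⟩, hr⟩ => ⟨f, ⟨hf0, fun x hx => hf1 x (h hx)⟩, hr⟩)

theorem rc_sup_le (hpos : ∀ f : C(Y, ℝ), (∀ x, 0 ≤ f x) → 0 ≤ ψ f) (K₁ K₂ : Set Y) : rc ψ (K₁ ∪ K₂) ≤ rc ψ K₁ + rc ψ K₂ := by
  refine le_of_forall_pos_le_add (fun ε hε => ?_)
  obtain ⟨r₁, ⟨f₁, ⟨hf₁0, hf₁1⟩, rfl⟩, hr₁⟩ :=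
    Real.lt_sInf_add_pos (rcSet_nonempty ψ K₁) (half_pos hε)
  obtain ⟨r₂, ⟨f₂, ⟨hf₂0, hf₂1⟩, rfl⟩, hr₂⟩ :=
    Real.lt_sInf_add_pos (rcSet_nonempty ψ K₂) (half_pos hε)
  have : rc ψ (K₁ ∪ K₂) ≤ ψ (f₁ + f₂) := by
    refine rc_le ψ hpos _ (fun x => by have := hf₁0 x; have := hf₂0 x; simp only [ContinuousMap.add_apply]; linarith) ?_
    rintro x (hx | hx)
    · have := hf₁1 x hx; have := hf₂0 x; simp only [ContinuousMap.add_apply]; linarith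
    · have := hf₂1 x hx; have := hf₁0 x; simp only [ContinuousMap.add_apply]; linarith
  rw [map_add] at this
  unfold rc at this ⊢
  linarith

theorem rc_sup_disjoint (hpos : ∀ f : C(Y, ℝ), (∀ x, 0 ≤ f x) → 0 ≤ ψ f) (K₁ K₂ : Set Y) (hd : Disjoint K₁ K₂)
    (h₁ : IsClosed K₁) (h₂ : IsClosed K₂) :
    rc ψ (K₁ ∪ K₂) = rc ψ K₁ + rc ψ K₂ := by
  refine le_antisymm (rc_sup_le ψ hpos K₁ K₂) ?_
  obtain ⟨g, hg0, hg1, hg01⟩ := exists_continuous_zero_one_of_isClosed h₁ h₂ hd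
  refine le_rc ψ (fun f hf0 hf1 => ?_)
  have e1 : rc ψ K₁ ≤ ψ (f * (1 - g)) := by
    refine rc_le ψ hpos _ (fun x => ?_) (fun x hx => ?_)
    · have := (hg01 x).2; have := hf0 x
      simp only [ContinuousMap.mul_apply, ContinuousMap.sub_apply, ContinuousMap.one_apply]
      nlinarith
    · have hgx : g x = 0 := hg0 hx
      have := hf1 x (Or.inl hx)
      simp only [ContinuousMap.mul_apply, ContinuousMap.sub_apply, ContinuousMap.one_apply, hgx]
      linarith
  have e2 : rc ψ K₂ ≤ ψ (f * g) := by
    refine rc_le ψ hpos _ (fun x => ?_) (fun x hx => ?_)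
    · have := (hg01 x).1; have := hf0 x
      simp only [ContinuousMap.mul_apply]
      nlinarith
    · have hgx : g x = 1 := hg1 hx
      have := hf1 x (Or.inr hx)
      simp only [ContinuousMap.mul_apply, hgx]
      linarith
  have : f * (1 - g) + f * g = f := by ring
  have := map_add ψ (f * (1 - g)) (f * g)
  rw [‹f * (1 - g) + f * g = f›] at this
  linarith

/-- The content associated to ψ. -/
noncomputable def rcContent (hpos : ∀ f : C(Y, ℝ), (∀ x, 0 ≤ f x) → 0 ≤ ψ f) : Content Y where
  toFun K := Real.toNNReal (rc ψ K.1)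
  mono' K₁ K₂ h := Real.toNNReal_mono (rc_mono ψ hpos h)
  sup_disjoint' K₁ K₂ hd hc₁ hc₂ := by
    have hcar : (K₁ ⊔ K₂).carrier = K₁.carrier ∪ K₂.carrier := rfl
    rw [hcar, rc_sup_disjoint ψ hpos K₁.1 K₂.1 hd hc₁ hc₂,
      Real.toNNReal_add (rc_nonneg ψ hpos K₁.1) (rc_nonneg ψ hpos K₂.1)]
  sup_le' K₁ K₂ := by
    have hcar : (K₁ ⊔ K₂).carrier = K₁.carrier ∪ K₂.carrier := rfl
    rw [hcar, ← Real.toNNReal_add (rc_nonneg ψ hpos K₁.1) (rc_nonneg ψ hpos K₂.1)]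
    exact Real.toNNReal_mono (rc_sup_le ψ hpos K₁.1 K₂.1)


theorem rcContent_apply (hpos : ∀ f : C(Y, ℝ), (∀ x, 0 ≤ f x) → 0 ≤ ψ f)
    (K : TopologicalSpace.Compacts Y) :
    rcContent ψ hpos K = ((rc ψ K.1).toNNReal : ℝ≥0∞) := rfl

theorem sum_clamp (n : ℕ) (t : ℝ) (h0 : 0 ≤ t) (hn : t ≤ n) :
    ∑ j ∈ Finset.range n, min 1 (max (t - (j : ℝ)) 0) = t := by
  induction n with
  | zero => simp at hn; simp [le_antisymm hn h0]
  | succ n ih =>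
    rw [Finset.sum_range_succ]
    rcases le_or_gt t n with h | h
    · rw [ih h]
      have : t - (n : ℝ) ≤ 0 := by linarith
      rw [max_eq_right this, min_eq_right (by norm_num : (0:ℝ) ≤ 1)]
      ring
    · have hste : ∀ j ∈ Finset.range n, min 1 (max (t - (j : ℝ)) 0) = 1 := by
        intro j hj
        have hj' : (j : ℝ) ≤ (n : ℝ) - 1 := by
          have := Finset.mem_range.mp hj
          have : (j : ℝ) + 1 ≤ (n : ℝ) := by exact_mod_cast this
          linarith
        have h1 : 1 ≤ t - (j : ℝ) := by linarith
        rw [max_eq_left (by linarith), min_eq_left h1]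
      rw [Finset.sum_congr rfl hste]
      have hn1 : t - (n : ℝ) ≤ 1 := by push_cast at hn ⊢; linarith
      rw [max_eq_left (by linarith), min_eq_right hn1]
      simp

theorem rmk_exists (hpos : ∀ f : C(Y, ℝ), (∀ x, 0 ≤ f x) → 0 ≤ ψ f) (hone : ψ 1 = 1) :
    ∃ μ : Measure Y, IsProbabilityMeasure μ ∧ ∀ f : C(Y, ℝ), ψ f = ∫ x, f x ∂μ := by
  classical
  set ν := rcContent ψ hpos with hν
  set μ := ν.measure with hμdef
  -- the measure of the whole space is 1
  have hνuniv_le : rcContent ψ hpos ⟨Set.univ, isCompact_univ⟩ ≤ (1 : ℝ≥0∞) := by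
    rw [rcContent_apply]
    refine ENNReal.coe_le_one_iff.mpr <| Real.toNNReal_le_one.mpr ?_
    rw [← hone]
    exact rc_le ψ hpos _ (fun x => by norm_num) (fun x _ => by norm_num)
  have hνuniv_ge : (1 : ℝ≥0∞) ≤ rcContent ψ hpos ⟨Set.univ, isCompact_univ⟩ := by
    rw [rcContent_apply]
    refine ENNReal.one_le_coe_iff.mpr <| Real.one_le_toNNReal.mpr ?_
    rw [← hone]
    exact le_rc ψ (fun g hg0 hg1 => psi_mono ψ hpos (fun x => by simpa using hg1 x trivial))
  have hμuniv : μ Set.univ = 1 := by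
    rw [hμdef, ν.measure_apply MeasurableSet.univ,
      ν.outerMeasure_of_isOpen Set.univ isOpen_univ]
    apply le_antisymm
    · refine le_trans (ν.innerContent_le ⟨Set.univ, isOpen_univ⟩ ⟨Set.univ, isCompact_univ⟩
        le_rfl) ?_
      exact hνuniv_le
    · refine le_trans ?_ (ν.le_innerContent ⟨Set.univ, isCompact_univ⟩ ⟨Set.univ, isOpen_univ⟩
        le_rfl)
      exact hνuniv_ge
  have hPM : IsProbabilityMeasure μ := ⟨hμuniv⟩
  have hint : ∀ f : C(Y, ℝ), Integrable f μ := fun f =>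
    f.continuous.integrable_of_hasCompactSupport
      (IsCompact.of_isClosed_subset isCompact_univ (isClosed_tsupport _) (Set.subset_univ _))
  -- measure of compact sets is at least the content
  have hcompact : ∀ K : Set Y, IsCompact K → rc ψ K ≤ (μ K).toReal := by
    intro K hK
    have h1 : ν ⟨K, hK⟩ ≤ ν.outerMeasure K := ν.le_outerMeasure_compacts ⟨K, hK⟩
    rw [← ν.measure_apply (hK.isClosed.measurableSet)] at h1
    have h2 : μ K ≠ ⊤ := (measure_lt_top μ K).ne
    have h3 : (ν ⟨K, hK⟩).toReal ≤ (μ K).toReal := ENNReal.toReal_mono h2 h1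
    rw [hν, rcContent_apply] at h3
    rwa [ENNReal.coe_toReal, Real.coe_toNNReal _ (rc_nonneg ψ hpos K)] at h3
  -- main inequality for 0 ≤ f ≤ 1
  have main01 : ∀ f : C(Y, ℝ), (∀ x, 0 ≤ f x) → (∀ x, f x ≤ 1) → ψ f ≤ ∫ x, f x ∂μ := by
    intro f hf0 hf1
    refine le_of_forall_pos_le_add (fun ε hε => ?_)
    obtain ⟨N, hN⟩ := exists_nat_one_div_lt hε
    set n := N + 1 with hn
    -- the plateau functions
    have hcont : ∀ j : ℕ, Continuous fun x => min 1 (max ((n : ℝ) * f x - (j : ℝ)) 0) := by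
      intro j
      exact continuous_const.min (((continuous_const.mul f.continuous).sub
        continuous_const).max continuous_const)
    set fj : ℕ → C(Y, ℝ) := fun j => ⟨_, hcont j⟩ with hfj
    have hfj_apply : ∀ j x, fj j x = min 1 (max ((n : ℝ) * f x - (j : ℝ)) 0) := fun j x => rfl
    have hfj0 : ∀ j x, 0 ≤ fj j x := by
      intro j x; rw [hfj_apply]
      exact le_min (by norm_num) (le_max_right _ _)
    have hfj1 : ∀ j x, fj j x ≤ 1 := fun j x => min_le_left _ _
    -- the sum identity
    have hsum : ∀ x, ∑ j ∈ Finset.range n, fj j x = (n : ℝ) * f x := by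
      intro x
      have h0 : 0 ≤ (n : ℝ) * f x := mul_nonneg (by positivity) (hf0 x)
      have h1 : (n : ℝ) * f x ≤ (n : ℝ) := by
        have := hf1 x
        have hx := hf1 x
        have hnp : (0:ℝ) < (n:ℝ) := by positivity
        nlinarith
      simpa [hfj_apply] using sum_clamp n ((n : ℝ) * f x) h0 h1
    -- compact level sets
    set K : ℕ → Set Y := fun j => {x | (j : ℝ) ≤ (n : ℝ) * f x} with hK
    have hKc : ∀ j, IsCompact (K j) := by
      intro j
      have : IsClosed (K j) :=
        isClosed_le continuous_const (continuous_const.mul f.continuous)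
      exact this.isCompact
    -- step 1 : ψ (fj j) ≤ μ (K j)
    have step1 : ∀ j, ψ (fj j) ≤ (μ (K j)).toReal := by
      intro j
      refine le_trans ?_ (hcompact (K j) (hKc j))
      refine le_rc ψ (fun g hg0 hg1 => psi_mono ψ hpos (fun x => ?_))
      by_cases hx : (j : ℝ) ≤ (n : ℝ) * f x
      · exact le_trans (hfj1 j x) (hg1 x hx)
      · have : (n : ℝ) * f x - (j : ℝ) ≤ 0 := by linarith [lt_of_not_ge hx]
        rw [hfj_apply, max_eq_right this, min_eq_right (by norm_num : (0:ℝ) ≤ 1)]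
        exact hg0 x
    -- step 2 : μ (K (j+1)) ≤ ∫ fj j
    have step2 : ∀ j, (μ (K (j + 1))).toReal ≤ ∫ x, fj j x ∂μ := by
      intro j
      have heq : ∫ x in K (j + 1), fj j x ∂μ = (μ (K (j + 1))).toReal := by
        rw [setIntegral_congr_fun (hKc (j + 1)).isClosed.measurableSet
          (g := fun _ => (1 : ℝ)) ?_]
        · rw [setIntegral_const]; simp; rfl
        · intro x hx
          have hx' : ((j : ℝ) + 1) ≤ (n : ℝ) * f x := by
            simp only [hK, Set.mem_setOf_eq] at hx; push_cast at hx ⊢; linarith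
          have h1 : 1 ≤ (n : ℝ) * f x - (j : ℝ) := by linarith
          simp only [hfj_apply]
          rw [max_eq_left (by linarith), min_eq_left h1]
      rw [← heq]
      exact setIntegral_le_integral (hint (fj j))
        (Filter.Eventually.of_forall (fun x => hfj0 j x))
    -- assembling
    have hψsum : ∑ j ∈ Finset.range n, ψ (fj j) = (n : ℝ) * ψ f := by
      rw [← map_sum]
      have : ∑ j ∈ Finset.range n, fj j = (n : ℝ) • f := by
        ext x
        simpa using hsum x
      rw [this, LinearMap.map_smul]
      simp
    have hintsum : ∑ j ∈ Finset.range n, ∫ x, fj j x ∂μ = (n : ℝ) * ∫ x, f x ∂μ := by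
      rw [← integral_finset_sum _ (fun j _ => hint (fj j)), ← integral_const_mul]
      congr 1
      ext x
      simpa using hsum x
    have hchain : (n : ℝ) * ψ f ≤ (n : ℝ) * ∫ x, f x ∂μ + 1 := by
      rw [← hψsum, ← hintsum]
      have e1 : ∑ j ∈ Finset.range n, ψ (fj j)
          = ∑ j ∈ Finset.range N, ψ (fj (j + 1)) + ψ (fj 0) := Finset.sum_range_succ' _ N
      have e2 : ∑ j ∈ Finset.range N, ψ (fj (j + 1))
          ≤ ∑ j ∈ Finset.range N, ∫ x, fj j x ∂μ :=
        Finset.sum_le_sum (fun j _ => le_trans (step1 (j + 1)) (step2 j))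
      have e3 : ψ (fj 0) ≤ 1 := by
        rw [← hone]
        exact psi_mono ψ hpos (fun x => by simpa using hfj1 0 x)
      have e4 : ∑ j ∈ Finset.range N, ∫ x, fj j x ∂μ
          ≤ ∑ j ∈ Finset.range n, ∫ x, fj j x ∂μ := by
        rw [hn, Finset.sum_range_succ]
        have : 0 ≤ ∫ x, fj N x ∂μ :=
          integral_nonneg (fun x => hfj0 N x)
        linarith
      rw [e1]
      linarith
    have hnpos : (0 : ℝ) < (n : ℝ) := by positivity
    have := (div_le_div_iff_of_pos_right hnpos).mpr hchain
    calc ψ f = ((n : ℝ) * ψ f) / n := by field_simp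
    _ ≤ ((n : ℝ) * ∫ x, f x ∂μ + 1) / n := by
        gcongr
    _ = (∫ x, f x ∂μ) + 1 / n := by field_simp
    _ ≤ (∫ x, f x ∂μ) + ε := by
        have : (1 : ℝ) / n ≤ ε := by
          rw [hn]
          push_cast
          exact le_of_lt hN
        linarith
  -- general inequality
  have mainle : ∀ f : C(Y, ℝ), ψ f ≤ ∫ x, f x ∂μ := by
    intro f
    set M : ℝ := ‖f‖ + 1 with hM
    have hMpos : 0 < M := by positivity
    have hbound : ∀ x, |f x| ≤ ‖f‖ := fun x => by
      simpa using f.norm_coe_le_norm x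
    set g : C(Y, ℝ) := (2 * M)⁻¹ • (f + ContinuousMap.const Y M) with hg
    have hg_apply : ∀ x, g x = (2 * M)⁻¹ * (f x + M) := fun x => rfl
    have hg0 : ∀ x, 0 ≤ g x := by
      intro x
      rw [hg_apply]
      have := abs_le.mp (hbound x)
      have h2M : (0 : ℝ) < (2 * M)⁻¹ := by positivity
      nlinarith [this.1]
    have hg1 : ∀ x, g x ≤ 1 := by
      intro x
      rw [hg_apply]
      have := abs_le.mp (hbound x)
      rw [inv_mul_le_iff₀ (by positivity)]
      nlinarith [this.2]
    have := main01 g hg0 hg1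
    have hψg : ψ g = (2 * M)⁻¹ * (ψ f + M) := by
      rw [hg, LinearMap.map_smul, map_add]
      have : ψ (ContinuousMap.const Y M) = M := by
        have : (ContinuousMap.const Y M) = M • (1 : C(Y, ℝ)) := by
          ext x; simp
        rw [this, LinearMap.map_smul, hone]
        simp
      rw [this]
      simp [mul_add]
    have hintg : ∫ x, g x ∂μ = (2 * M)⁻¹ * ((∫ x, f x ∂μ) + M) := by
      have h1 : ∫ x, g x ∂μ = (2 * M)⁻¹ * ∫ x, (f x + M) ∂μ := by
        simp only [hg_apply]
        exact integral_const_mul _ _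
      rw [h1, integral_add (hint f) (integrable_const M), integral_const]
      simp [hμuniv]
    rw [hψg, hintg] at this
    have h2M : (0 : ℝ) < (2 * M)⁻¹ := by positivity
    nlinarith
  refine ⟨μ, hPM, fun f => ?_⟩
  have h1 := mainle f
  have h2 := mainle (-f)
  rw [map_neg] at h2
  have : ∫ x, (-f) x ∂μ = -∫ x, f x ∂μ := by
    simp only [ContinuousMap.neg_apply]
    exact integral_neg _
  rw [this] at h2
  linarith

end RMKaux

end RMK
/-- Key exhaustion lemma: given a monotone open cover, there is a stage `k` such that any
nonnegative continuous function vanishing on `W k` has `0 ≤ u (-f)`. -/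
theorem exists_good_stage {X : Type*} [TopologicalSpace X]
    (u : C(X, ℝ) → ℝ)
    (hhom : ∀ (c : ℝ), 0 ≤ c → ∀ f : C(X, ℝ), u (c • f) = c * u f)
    (hmono : ∀ f g : C(X, ℝ), (∀ x, f x ≤ g x) → u f ≤ u g)
    (W : ℕ → Set X) (hWopen : ∀ k, IsOpen (W k)) (hWmono : Monotone W)
    (hWcover : ∀ x, ∃ k, x ∈ W k) :
    ∃ k, ∀ f : C(X, ℝ), (∀ x, 0 ≤ f x) → (∀ x ∈ W k, f x = 0) → 0 ≤ u (-f) := by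
  by_contra hcon
  push_neg at hcon
  choose F hF0 hFvan hFneg using hcon
  -- rescale
  set c : ℕ → ℝ := fun k => ((k : ℝ) + 1) / (-u (-F k)) with hc
  have hcpos : ∀ k, 0 < c k := fun k =>
    div_pos (by positivity) (by linarith [hFneg k])
  set g : ℕ → C(X, ℝ) := fun k => c k • F k with hg
  have hg0 : ∀ k x, 0 ≤ g k x := fun k x =>
    mul_nonneg (hcpos k).le (hF0 k x)
  have hgvan : ∀ k, ∀ x ∈ W k, g k x = 0 := fun k x hx => by
    show c k * F k x = 0
    rw [hFvan k x hx, mul_zero]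
  have hgu : ∀ k, u (-g k) = -((k : ℝ) + 1) := by
    intro k
    have : -g k = c k • (-F k) := by
      ext x; simp [hg]
    rw [this, hhom (c k) (hcpos k).le, hc]
    have hne : -u (-F k) ≠ 0 := by linarith [hFneg k]
    show ((k : ℝ) + 1) / -u (-F k) * u (-F k) = -((k : ℝ) + 1)
    rw [div_mul_eq_mul_div, div_neg, mul_div_assoc, div_self (hFneg k).ne, mul_one]
  -- pointwise summability
  have hzero_tail : ∀ (x : X) (k₀ : ℕ), x ∈ W k₀ → ∀ k, k ∉ Finset.range k₀ → g k x = 0 := by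
    intro x k₀ hx k hk
    have hk' : k₀ ≤ k := le_of_not_gt (fun h => hk (Finset.mem_range.mpr h))
    exact hgvan k x (hWmono hk' hx)
  have hsummable : ∀ x : X, Summable fun k => g k x := by
    intro x
    obtain ⟨k₀, hk₀⟩ := hWcover x
    exact summable_of_ne_finset_zero (s := Finset.range k₀)
      (fun k hk => hzero_tail x k₀ hk₀ k hk)
  have hGcont : Continuous fun x => ∑' k, g k x := by
    rw [continuous_iff_continuousAt]
    intro x
    obtain ⟨k₀, hk₀⟩ := hWcover x
    have hloc : ∀ y ∈ W k₀, (∑' k, g k y) = ∑ k ∈ Finset.range k₀, g k y := by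
      intro y hy
      exact tsum_eq_sum (fun k hk => hzero_tail y k₀ hy k hk)
    have hfin : ContinuousAt (fun y => ∑ k ∈ Finset.range k₀, g k y) x := by
      apply Continuous.continuousAt
      exact continuous_finset_sum _ (fun k _ => (g k).continuous)
    apply hfin.congr
    filter_upwards [(hWopen k₀).mem_nhds hk₀] with y hy
    exact (hloc y hy).symm
  set G : C(X, ℝ) := ⟨_, hGcont⟩ with hG
  have hGge : ∀ k x, g k x ≤ G x := by
    intro k x
    exact Summable.le_tsum (hsummable x) k (fun j _ => hg0 j x)
  have hGle : ∀ k : ℕ, u (-G) ≤ -((k : ℝ) + 1) := by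
    intro k
    rw [← hgu k]
    exact hmono _ _ (fun x => by simpa using hGge k x)
  obtain ⟨k, hk⟩ := exists_nat_gt (-u (-G))
  have := hGle k
  linarith



set_option maxHeartbeats 2000000 in
/-- Representation on C(X) for X a non-compact Polish space: a finite-valued concave,
positively homogeneous, monetary, monotone functional on all continuous functions is
represented by probability measures supported in a common compact set L. -/
theorem representation_on_CX
    {X : Type*} [TopologicalSpace X] [PolishSpace X]
    [MeasurableSpace X] [BorelSpace X]
    (hnc : ¬ CompactSpace X)
    (u : C(X, ℝ) → ℝ)
    (hconc : ∀ f g : C(X, ℝ), ∀ t : ℝ, 0 ≤ t → t ≤ 1 →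
      t * u f + (1 - t) * u g ≤ u (t • f + (1 - t) • g))
    (hhom : ∀ (c : ℝ), 0 ≤ c → ∀ f : C(X, ℝ), u (c • f) = c * u f)
    (hcash : ∀ f : C(X, ℝ), ∀ a : ℝ, u (f + ContinuousMap.const X a) = u f + a)
    (hmono : ∀ f g : C(X, ℝ), (∀ x, f x ≤ g x) → u f ≤ u g) :
    ∃ (L : Set X) (S : Set (ProbabilityMeasure X)),
      IsCompact L ∧
      (∀ μ ∈ S, ∀ ν ∈ S, ∀ t : NNReal, t ≤ 1 →
        ∃ σ ∈ S, σ.toMeasure = t • μ.toMeasure + (1 - t) • ν.toMeasure) ∧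
      (∀ μ ∈ S, μ.toMeasure Lᶜ = 0) ∧
      ∀ f : C(X, ℝ), u f = sInf {r : ℝ | ∃ μ ∈ S, r = ∫ x, f x ∂μ.toMeasure} := by
  classical
  letI := TopologicalSpace.upgradeIsCompletelyMetrizable X
  have hXne : Nonempty X := by
    by_contra h
    exact hnc (by
      have : IsEmpty X := not_nonempty_iff.mp h
      infer_instance)
  -- basic consequences of the axioms
  have u0 : u 0 = 0 := by simpa using hhom 0 le_rfl 0
  have usuper : ∀ f g : C(X, ℝ), u f + u g ≤ u (f + g) := by
    intro f g
    have h := hconc ((2 : ℝ) • f) ((2 : ℝ) • g) (1/2) (by norm_num) (by norm_num)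
    have e1 : (1/2 : ℝ) • ((2 : ℝ) • f) = f := by rw [smul_smul]; norm_num
    have e2 : (1 - 1/2 : ℝ) • ((2 : ℝ) • g) = g := by rw [smul_smul]; norm_num
    rw [e1, e2, hhom 2 (by norm_num) f, hhom 2 (by norm_num) g] at h
    linarith
  have uconst : ∀ a : ℝ, u (ContinuousMap.const X a) = a := by
    intro a
    simpa [u0] using hcash 0 a
  have uneg_pair : ∀ f : C(X, ℝ), u f + u (-f) ≤ 0 := by
    intro f
    have h := usuper f (-f)
    simpa [u0] using h
  have u1 : u 1 = 1 := by
    have : (1 : C(X, ℝ)) = ContinuousMap.const X 1 := rfl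
    rw [this, uconst]
  have uneg1 : u (-1) = -1 := by
    have : (-1 : C(X, ℝ)) = ContinuousMap.const X (-1) := rfl
    rw [this, uconst]
  -- the exhaustion construction
  set xs : ℕ → X := TopologicalSpace.denseSeq X with hxs
  have hdense : DenseRange xs := TopologicalSpace.denseRange_denseSeq X
  set U : ℕ → ℕ → Set X :=
    fun m k => ⋃ i ∈ Finset.range k, Metric.ball (xs i) (1/((m:ℝ)+1)) with hU
  have hrpos : ∀ m : ℕ, (0:ℝ) < 1/((m:ℝ)+1) := fun m => by positivity
  have hUopen : ∀ m k, IsOpen (U m k) :=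
    fun m k => isOpen_biUnion (fun i _ => Metric.isOpen_ball)
  have hUmono : ∀ m, Monotone (U m) := by
    intro m k₁ k₂ hk
    apply Set.biUnion_subset_biUnion_left
    intro i hi
    exact Finset.mem_range.mpr (lt_of_lt_of_le (Finset.mem_range.mp hi) hk)
  have hUcover : ∀ m x, ∃ k, x ∈ U m k := by
    intro m x
    obtain ⟨i, hi⟩ := hdense.exists_dist_lt x (hrpos m)
    exact ⟨i + 1, Set.mem_biUnion (Finset.self_mem_range_succ i) (Metric.mem_ball.mpr hi)⟩
  have hstage : ∀ m, ∃ k, ∀ f : C(X, ℝ), (∀ x, 0 ≤ f x) →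
      (∀ x ∈ U m k, f x = 0) → 0 ≤ u (-f) :=
    fun m => exists_good_stage u hhom hmono (U m) (hUopen m) (hUmono m) (hUcover m)
  choose k0 hk0 using hstage
  set W : ℕ → Set X := fun m => U m (k0 m + 1) with hW
  have hkey : ∀ m, ∀ f : C(X, ℝ), (∀ x, 0 ≤ f x) → (∀ x ∈ W m, f x = 0) → 0 ≤ u (-f) :=
    fun m f h0 hvan => hk0 m f h0 (fun x hx => hvan x (hUmono m (Nat.le_succ _) hx))
  have hWopen : ∀ m, IsOpen (W m) := fun m => hUopen m _
  have hWne : ∀ m, (W m).Nonempty :=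
    fun m => ⟨xs 0, Set.mem_biUnion (Finset.mem_range.mpr (Nat.succ_pos _))
      (Metric.mem_ball_self (hrpos m))⟩
  -- the compact set L
  set L : Set X := ⋂ m, {x | Metric.infDist x (W m) ≤ 1/((m:ℝ)+1)} with hL
  have hLmem : ∀ x, x ∈ L ↔ ∀ m, Metric.infDist x (W m) ≤ 1/((m:ℝ)+1) := by
    intro x
    simp [hL, Set.mem_iInter]
  have hLclosed : IsClosed L := by
    apply isClosed_iInter
    intro m
    exact isClosed_le (Metric.continuous_infDist_pt _) continuous_const
  have hLcomp : IsCompact L := by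
    refine TotallyBounded.isCompact_of_isClosed ?_ hLclosed
    rw [Metric.totallyBounded_iff]
    intro ε hε
    obtain ⟨m, hm⟩ := exists_nat_gt (3 / ε)
    refine ⟨xs '' (Set.Iio (k0 m + 1)), (Set.finite_Iio _).image _, ?_⟩
    intro x hx
    have h1 : Metric.infDist x (W m) ≤ 1/((m:ℝ)+1) := (hLmem x).mp hx m
    have h2 : Metric.infDist x (W m) < 2/((m:ℝ)+1) :=
      lt_of_le_of_lt h1 (by
        rw [div_lt_div_iff_of_pos_right (by positivity)]
        norm_num)
    obtain ⟨z, hzW, hz⟩ := (Metric.infDist_lt_iff (hWne m)).mp h2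
    obtain ⟨i, hi, hzi⟩ := by
      simpa [hW, hU, Set.mem_iUnion] using hzW
    have hdi : dist x (xs i) < 3/((m:ℝ)+1) := by
      have ht := dist_triangle x z (xs i)
      have hz2 : dist z (xs i) < 1/((m:ℝ)+1) := by rw [one_div]; exact hzi
      have he : 2/((m:ℝ)+1) + 1/((m:ℝ)+1) = 3/((m:ℝ)+1) := by ring
      linarith
    have h3 : 3/((m:ℝ)+1) < ε := by
      rw [div_lt_iff₀ (by positivity)]
      have h4 : 3 / ε < (m:ℝ) := hm
      have h5 : 3 < ε * (m:ℝ) := by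
        rw [div_lt_iff₀ hε] at h4
        linarith
      nlinarith
    refine Set.mem_biUnion ⟨i, Nat.lt_succ_of_le hi, rfl⟩ ?_
    rw [Metric.mem_ball]
    linarith
  -- Hahn-Banach: supporting linear functionals
  set N : C(X, ℝ) → ℝ := fun f => -u (-f) with hN
  have hN_hom : ∀ c : ℝ, 0 < c → ∀ f : C(X, ℝ), N (c • f) = c * N f := by
    intro c hc f
    have : -(c • f) = c • (-f) := by rw [smul_neg]
    rw [hN]
    simp only
    rw [this, hhom c hc.le]
    ring
  have hN_add : ∀ f g : C(X, ℝ), N (f + g) ≤ N f + N g := by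
    intro f g
    have h := usuper (-f) (-g)
    have : -f + -g = -(f + g) := by ring
    rw [this] at h
    simp only [hN]
    linarith
  have hHBkey : ∀ f₀ : C(X, ℝ), f₀ ≠ 0 →
      ∃ φ : C(X, ℝ) →ₗ[ℝ] ℝ, (∀ g, u g ≤ φ g) ∧ φ f₀ = u f₀ := by
    intro f₀ hf₀
    have Hns : ∀ c : ℝ, c • f₀ = 0 → c • (u f₀) = 0 := by
      intro c hc
      rcases smul_eq_zero.mp hc with h | h
      · rw [h, zero_smul]
      · exact absurd h hf₀
    set pm := LinearPMap.mkSpanSingleton' (σ := RingHom.id ℝ) f₀ (u f₀) Hns with hpm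
    have hdom : ∀ z : pm.domain, pm z ≤ N z.1 := by
      rintro ⟨z, hz⟩
      have hz' : z ∈ (Submodule.span ℝ {f₀}) := hz
      obtain ⟨c, hc⟩ := Submodule.mem_span_singleton.mp hz'
      have h2 : pm ⟨z, hz⟩ = c • (u f₀) := by
        have he : (⟨z, hz⟩ : pm.domain) = ⟨c • f₀, by rw [hc]; exact hz⟩ :=
          Subtype.ext hc.symm
        rw [he]
        exact LinearPMap.mkSpanSingleton'_apply f₀ (u f₀) Hns c _
      rw [h2]
      simp only
      rw [← hc]
      rcases lt_trichotomy c 0 with h | h | h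
      · have e1 : c • f₀ = (-c) • (-f₀) := by rw [smul_neg, neg_smul, neg_neg]
        rw [e1, hN_hom (-c) (by linarith) (-f₀)]
        have : N (-f₀) = -u f₀ := by simp [hN]
        rw [this]
        have : c • u f₀ = c * u f₀ := rfl
        rw [this]
        ring_nf
        exact le_rfl
      · rw [h, zero_smul, zero_smul]
        simp [hN, u0]
      · rw [hN_hom c h f₀]
        have h1 : u f₀ ≤ N f₀ := by
          have := uneg_pair f₀
          simp only [hN]
          linarith
        have : c • u f₀ = c * u f₀ := rfl
        rw [this]
        exact mul_le_mul_of_nonneg_left h1 h.le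
    obtain ⟨φ, hφeq, hφle⟩ := exists_extension_of_le_sublinear pm N hN_hom hN_add hdom
    refine ⟨φ, ?_, ?_⟩
    · intro g
      have h := hφle (-g)
      rw [map_neg] at h
      have : N (-g) = -u g := by simp [hN]
      rw [this] at h
      linarith
    · have hmem : f₀ ∈ pm.domain := Submodule.mem_span_singleton_self f₀
      have := hφeq ⟨f₀, hmem⟩
      rw [this]
      exact LinearPMap.mkSpanSingleton'_apply_self f₀ (u f₀) Hns hmem
  have hHB : ∀ f₀ : C(X, ℝ),
      ∃ φ : C(X, ℝ) →ₗ[ℝ] ℝ, (∀ g, u g ≤ φ g) ∧ φ f₀ = u f₀ := by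
    intro f₀
    by_cases hf₀ : f₀ = 0
    · have hone_ne : (1 : C(X, ℝ)) ≠ 0 := by
        intro h
        have := ContinuousMap.congr_fun h hXne.some
        norm_num at this
      obtain ⟨φ, hφ, _⟩ := hHBkey 1 hone_ne
      exact ⟨φ, hφ, by rw [hf₀, map_zero, u0]⟩
    · exact hHBkey f₀ hf₀
  -- the representing measures
  have hrep : ∀ f₀ : C(X, ℝ), ∃ π : Measure X, IsProbabilityMeasure π ∧
      π Lᶜ = 0 ∧ (∀ g : C(X, ℝ), u g ≤ ∫ x, g x ∂π) ∧ ∫ x, f₀ x ∂π = u f₀ := by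
    intro f₀
    obtain ⟨φ, hφge, hφf₀⟩ := hHB f₀
    -- positivity and monotonicity of φ
    have hφpos : ∀ g : C(X, ℝ), (∀ x, 0 ≤ g x) → 0 ≤ φ g := by
      intro g hg
      have h1 : u 0 ≤ u g := hmono 0 g (fun x => by simpa using hg x)
      rw [u0] at h1
      exact le_trans h1 (hφge g)
    have hφmono : ∀ g h : C(X, ℝ), (∀ x, g x ≤ h x) → φ g ≤ φ h := by
      intro g h hgh
      have := hφpos (h - g) (fun x => by simpa using hgh x)
      rw [map_sub] at this
      linarith
    have hφ1 : φ 1 = 1 := by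
      have h1 : u 1 ≤ φ 1 := hφge 1
      have h2 : u (-1) ≤ φ (-1) := hφge (-1)
      rw [map_neg] at h2
      rw [u1] at h1
      rw [uneg1] at h2
      linarith
    have hφconst : ∀ a : ℝ, φ (ContinuousMap.const X a) = a := by
      intro a
      have : ContinuousMap.const X a = a • (1 : C(X, ℝ)) := by ext x; simp
      rw [this, LinearMap.map_smul, hφ1, smul_eq_mul, mul_one]
    -- φ kills nonneg functions vanishing at some stage W m
    have hkillm : ∀ m, ∀ g : C(X, ℝ), (∀ x, 0 ≤ g x) → (∀ x ∈ W m, g x = 0) →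
        φ g = 0 := by
      intro m g hg0 hgvan
      have h1 : 0 ≤ u (-g) := hkey m g hg0 hgvan
      have h2 : u (-g) ≤ φ (-g) := hφge (-g)
      rw [map_neg] at h2
      have h3 : 0 ≤ φ g := hφpos g hg0
      linarith
    -- the cutoff functions
    have hρcont : ∀ m : ℕ, Continuous fun x =>
        min 1 (((m:ℝ)+1) * Metric.infDist x (W m)) :=
      fun m => continuous_const.min (continuous_const.mul (Metric.continuous_infDist_pt _))
    set ρ : ℕ → C(X, ℝ) := fun m => ⟨_, hρcont m⟩ with hρ
    have hρ_apply : ∀ m x, ρ m x = min 1 (((m:ℝ)+1) * Metric.infDist x (W m)) :=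
      fun m x => rfl
    have hρ0 : ∀ m x, 0 ≤ ρ m x := by
      intro m x
      rw [hρ_apply]
      exact le_min (by norm_num) (mul_nonneg (by positivity) Metric.infDist_nonneg)
    have hρ1 : ∀ m x, ρ m x ≤ 1 := fun m x => min_le_left _ _
    have hρvan : ∀ m, ∀ x ∈ W m, ρ m x = 0 := by
      intro m x hx
      rw [hρ_apply, Metric.infDist_zero_of_mem hx, mul_zero, min_eq_right (by norm_num)]
    set gp : ℕ → C(X, ℝ) := fun M => ∏ m ∈ Finset.range M, ((1 : C(X, ℝ)) - ρ m) with hgp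
    have hgp_apply : ∀ M x, gp M x = ∏ m ∈ Finset.range M, (1 - ρ m x) := by
      intro M x
      rw [hgp, ContinuousMap.prod_apply]
      simp
    have hgp0 : ∀ M x, 0 ≤ gp M x := by
      intro M x
      rw [hgp_apply]
      exact Finset.prod_nonneg (fun m _ => by linarith [hρ1 m x])
    have hgp1 : ∀ M x, gp M x ≤ 1 := by
      intro M x
      rw [hgp_apply]
      exact Finset.prod_le_one (fun m _ => by linarith [hρ1 m x])
        (fun m _ => by linarith [hρ0 m x])
    -- the key step: multiplying by gp M does not change φ on nonneg functions
    have hstep : ∀ g : C(X, ℝ), (∀ x, 0 ≤ g x) → ∀ M, φ (g * gp M) = φ g := by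
      intro g hg0 M
      induction M with
      | zero =>
        congr 1
        ext x
        simp [hgp_apply]
      | succ M ih =>
        have hprod : g * gp (M+1) = g * gp M - g * gp M * ρ M := by
          ext x
          simp only [ContinuousMap.mul_apply, ContinuousMap.sub_apply]
          rw [hgp_apply, hgp_apply, Finset.prod_range_succ]
          ring
        have hz : φ (g * gp M * ρ M) = 0 := by
          apply hkillm M
          · intro x
            simp only [ContinuousMap.mul_apply]
            exact mul_nonneg (mul_nonneg (hg0 x) (hgp0 M x)) (hρ0 M x)
          · intro x hx
            simp only [ContinuousMap.mul_apply]
            rw [hρvan M x hx, mul_zero]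
        rw [hprod, map_sub, hz, sub_zero, ih]
    -- φ kills nonneg functions vanishing on L
    have hkill : ∀ g : C(X, ℝ), (∀ x, 0 ≤ g x) → (∀ x ∈ L, g x = 0) → φ g = 0 := by
      intro g hg0 hgL
      have hub : ∀ ε : ℝ, 0 < ε → φ g ≤ ε := by
        intro ε hε
        set g' : C(X, ℝ) := ⟨fun x => max (g x - ε) 0,
          (g.continuous.sub continuous_const).max continuous_const⟩ with hg'
        have hg'_apply : ∀ x, g' x = max (g x - ε) 0 := fun x => rfl
        have hg'0 : ∀ x, 0 ≤ g' x := fun x => le_max_right _ _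
        have hg'bound : ∀ x, g x ≤ g' x + ε := by
          intro x
          rw [hg'_apply]
          rcases le_total (g x - ε) 0 with h | h
          · rw [max_eq_right h]; linarith
          · rw [max_eq_left h]; linarith
        -- g' vanishes on a neighbourhood of L and off a "escape" region
        set FF : ℕ → C(X, ℝ) := fun M => g' * gp M with hFF
        have hFF0 : ∀ M x, 0 ≤ FF M x :=
          fun M x => mul_nonneg (hg'0 x) (hgp0 M x)
        have hFFfin : ∀ y : X, ∃ s : Finset ℕ, ∀ M ∉ s, FF M y = 0 := by
          intro y
          by_cases hy : g y < ε
          · refine ⟨∅, fun M _ => ?_⟩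
            have : g' y = 0 := by
              rw [hg'_apply, max_eq_right (by linarith)]
            simp only [hFF, ContinuousMap.mul_apply, this, zero_mul]
          · have hyL : y ∉ L := by
              intro hyL
              have := hgL y hyL
              have : (0:ℝ) < ε := hε
              have hgy : g y = 0 := hgL y hyL
              rw [hgy] at hy
              exact hy hε
            obtain ⟨m₀, hm₀⟩ : ∃ m₀, ¬ Metric.infDist y (W m₀) ≤ 1/((m₀:ℝ)+1) := by
              by_contra hcon
              push_neg at hcon
              exact hyL ((hLmem y).mpr hcon)
            push_neg at hm₀
            refine ⟨Finset.range (m₀ + 1), fun M hM => ?_⟩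
            have hm₀M : m₀ < M := by
              by_contra hc
              exact hM (Finset.mem_range.mpr (Nat.lt_succ_of_le (le_of_not_gt hc)))
            have hρy : ρ m₀ y = 1 := by
              rw [hρ_apply]
              refine min_eq_left ?_
              rw [div_lt_iff₀ (by positivity : (0:ℝ) < (m₀:ℝ)+1)] at hm₀
              linarith [mul_comm (Metric.infDist y (W m₀)) ((m₀:ℝ)+1)]
            have : gp M y = 0 := by
              rw [hgp_apply]
              exact Finset.prod_eq_zero (Finset.mem_range.mpr hm₀M)
                (by rw [hρy]; ring)
            simp only [hFF, ContinuousMap.mul_apply, this, mul_zero]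
        have hFFsummable : ∀ y, Summable fun M => FF M y := by
          intro y
          obtain ⟨s, hs⟩ := hFFfin y
          exact summable_of_ne_finset_zero (s := s) hs
        have hHcont : Continuous fun y => ∑' M, FF M y := by
          rw [continuous_iff_continuousAt]
          intro y
          by_cases hy : g y < ε
          · have hO : IsOpen {z | g z < ε} := isOpen_lt g.continuous continuous_const
            have : ∀ z ∈ {z | g z < ε}, (∑' M, FF M z) = 0 := by
              intro z hz
              have hg'z : g' z = 0 := by
                rw [hg'_apply, max_eq_right (by simpa using by linarith [Set.mem_setOf_eq ▸ hz])]
              have : ∀ M, FF M z = 0 := fun M => by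
                simp only [hFF, ContinuousMap.mul_apply, hg'z, zero_mul]
              simp [this]
            apply ContinuousAt.congr continuousAt_const
            filter_upwards [hO.mem_nhds hy] with z hz
            exact (this z hz).symm
          · have hyL : y ∉ L := by
              intro hyL
              have hgy : g y = 0 := hgL y hyL
              rw [hgy] at hy
              exact hy hε
            obtain ⟨m₀, hm₀⟩ : ∃ m₀, ¬ Metric.infDist y (W m₀) ≤ 1/((m₀:ℝ)+1) := by
              by_contra hcon
              push_neg at hcon
              exact hyL ((hLmem y).mpr hcon)
            push_neg at hm₀
            set V : Set X := {z | 1/((m₀:ℝ)+1) < Metric.infDist z (W m₀)} with hV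
            have hVopen : IsOpen V :=
              isOpen_lt continuous_const (Metric.continuous_infDist_pt _)
            have hyV : y ∈ V := hm₀
            have hloc : ∀ z ∈ V, (∑' M, FF M z) = ∑ M ∈ Finset.range (m₀+1), FF M z := by
              intro z hz
              apply tsum_eq_sum
              intro M hM
              have hm₀M : m₀ < M := by
                by_contra hc
                exact hM (Finset.mem_range.mpr (Nat.lt_succ_of_le (le_of_not_gt hc)))
              have hρz : ρ m₀ z = 1 := by
                rw [hρ_apply]
                refine min_eq_left ?_
                have hz' : 1/((m₀:ℝ)+1) < Metric.infDist z (W m₀) := hz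
                rw [div_lt_iff₀ (by positivity : (0:ℝ) < (m₀:ℝ)+1)] at hz'
                linarith [mul_comm (Metric.infDist z (W m₀)) ((m₀:ℝ)+1)]
              have : gp M z = 0 := by
                rw [hgp_apply]
                exact Finset.prod_eq_zero (Finset.mem_range.mpr hm₀M)
                  (by rw [hρz]; ring)
              simp only [hFF, ContinuousMap.mul_apply, this, mul_zero]
            have hfin : ContinuousAt (fun z => ∑ M ∈ Finset.range (m₀+1), FF M z) y :=
              (continuous_finset_sum _ (fun M _ => (FF M).continuous)).continuousAt
            apply hfin.congr
            filter_upwards [hVopen.mem_nhds hyV] with z hz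
            exact (hloc z hz).symm
        set H : C(X, ℝ) := ⟨_, hHcont⟩ with hH
        have hHge : ∀ M₀ : ℕ, (M₀ : ℝ) * φ g' ≤ φ H := by
          intro M₀
          have hle : ∀ y, (∑ M ∈ Finset.range M₀, FF M y) ≤ H y := by
            intro y
            exact (hFFsummable y).sum_le_tsum (Finset.range M₀) (fun M _ => hFF0 M y)
          have h1 : φ (∑ M ∈ Finset.range M₀, FF M) ≤ φ H := by
            apply hφmono
            intro y
            rw [ContinuousMap.sum_apply]
            exact hle y
          rw [map_sum] at h1
          have h2 : ∀ M ∈ Finset.range M₀, φ (FF M) = φ g' := by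
            intro M _
            exact hstep g' hg'0 M
          rw [Finset.sum_congr rfl h2, Finset.sum_const, Finset.card_range,
            nsmul_eq_mul] at h1
          exact h1
        have hφg'0 : φ g' ≤ 0 := by
          by_contra hc
          push_neg at hc
          obtain ⟨M₀, hM₀⟩ := exists_nat_gt (φ H / φ g')
          have := hHge M₀
          rw [div_lt_iff₀ hc] at hM₀
          linarith
        have hφg'eq : φ g' = 0 := le_antisymm hφg'0 (hφpos g' hg'0)
        have : φ g ≤ φ (g' + ContinuousMap.const X ε) := by
          apply hφmono
          intro x
          simpa using hg'bound x
        rw [map_add, hφg'eq, hφconst, zero_add] at this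
        exact this
      have h0 : 0 ≤ φ g := hφpos g hg0
      by_contra hne
      have hpos' : 0 < φ g := lt_of_le_of_ne h0 (Ne.symm hne)
      have := hub (φ g / 2) (by linarith)
      linarith
    -- φ only depends on values on L
    have heqL : ∀ g h : C(X, ℝ), (∀ x ∈ L, g x = h x) → φ g = φ h := by
      intro g h hgh
      set d := g - h with hd
      set dp : C(X, ℝ) := ⟨fun x => max (d x) 0, d.continuous.max continuous_const⟩ with hdp
      set dm : C(X, ℝ) := ⟨fun x => max (-d x) 0,
        (d.continuous.neg.max continuous_const)⟩ with hdm
      have h1 : φ dp = 0 := by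
        apply hkill
        · intro x; exact le_max_right _ _
        · intro x hx
          have : d x = 0 := by
            simp only [hd, ContinuousMap.sub_apply]
            rw [hgh x hx]; ring
          simp only [hdp]
          rw [ContinuousMap.coe_mk]
          rw [this, max_self]
      have h2 : φ dm = 0 := by
        apply hkill
        · intro x; exact le_max_right _ _
        · intro x hx
          have : d x = 0 := by
            simp only [hd, ContinuousMap.sub_apply]
            rw [hgh x hx]; ring
          simp only [hdm]
          rw [ContinuousMap.coe_mk]
          rw [this, neg_zero, max_self]
      have h3 : d = dp - dm := by
        ext x
        simp only [ContinuousMap.sub_apply, hdp, hdm, ContinuousMap.coe_mk]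
        rcases le_total (d x) 0 with h | h
        · rw [max_eq_right h, max_eq_left (by linarith)]; ring
        · rw [max_eq_left h, max_eq_right (by linarith)]; ring
      have h4 : φ d = 0 := by
        rw [h3, map_sub, h1, h2, sub_zero]
      rw [hd, map_sub] at h4
      linarith
    -- construct the measure via restriction to L and Riesz-Markov
    haveI : CompactSpace L := isCompact_iff_compactSpace.mp hLcomp
    have hext : ∀ g : C(L, ℝ), ∃ G : C(X, ℝ), G.restrict L = g :=
      fun g => ContinuousMap.exists_restrict_eq hLclosed g
    choose E hE using hext
    have hEeq : ∀ (g : C(L, ℝ)) (x : X) (hx : x ∈ L), E g x = g ⟨x, hx⟩ := by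
      intro g x hx
      have := ContinuousMap.congr_fun (hE g) ⟨x, hx⟩
      simpa [ContinuousMap.restrict] using this
    set ψ : C(L, ℝ) →ₗ[ℝ] ℝ := {
      toFun := fun g => φ (E g)
      map_add' := by
        intro g₁ g₂
        show φ (E (g₁ + g₂)) = φ (E g₁) + φ (E g₂)
        rw [← map_add]
        apply heqL
        intro x hx
        rw [hEeq (g₁ + g₂) x hx]
        simp only [ContinuousMap.add_apply]
        rw [hEeq g₁ x hx, hEeq g₂ x hx]
      map_smul' := by
        intro c g
        show φ (E (c • g)) = c • φ (E g)
        rw [← LinearMap.map_smul]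
        apply heqL
        intro x hx
        rw [hEeq (c • g) x hx]
        simp only [ContinuousMap.smul_apply, smul_eq_mul]
        rw [hEeq g x hx]
    } with hψ
    have hψ_apply : ∀ g, ψ g = φ (E g) := fun g => rfl
    have hψpos : ∀ g : C(L, ℝ), (∀ z, 0 ≤ g z) → 0 ≤ ψ g := by
      intro g hg
      rw [hψ_apply]
      have : φ (E g) = φ ⟨fun x => max (E g x) 0,
          (E g).continuous.max continuous_const⟩ := by
        apply heqL
        intro x hx
        show E g x = max (E g x) 0
        exact (max_eq_left (by rw [hEeq g x hx]; exact hg ⟨x, hx⟩)).symm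
      rw [this]
      exact hφpos _ (fun x => le_max_right _ _)
    have hψ1 : ψ 1 = 1 := by
      rw [hψ_apply]
      have : φ (E 1) = φ 1 := by
        apply heqL
        intro x hx
        rw [hEeq 1 x hx]
        simp
      rw [this, hφ1]
    obtain ⟨μL, hμLprob, hμLint⟩ := RMKaux.rmk_exists ψ hψpos hψ1
    set π : Measure X := μL.map Subtype.val with hπ
    have hπprob : IsProbabilityMeasure π :=
      Measure.isProbabilityMeasure_map measurable_subtype_coe.aemeasurable
    have hπnull : π Lᶜ = 0 := by
      rw [hπ, Measure.map_apply measurable_subtype_coe hLclosed.measurableSet.compl]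
      have : (Subtype.val : L → X) ⁻¹' Lᶜ = ∅ := by
        ext z
        simp [z.2]
      rw [this]
      simp
    have hπint : ∀ g : C(X, ℝ), ∫ x, g x ∂π = φ g := by
      intro g
      rw [hπ, integral_map measurable_subtype_coe.aemeasurable
        g.continuous.aestronglyMeasurable]
      have h1 : ∫ z : L, g ↑z ∂μL = ψ (g.restrict L) := by
        rw [hμLint (g.restrict L)]
        rfl
      rw [h1, hψ_apply]
      apply heqL
      intro x hx
      rw [hEeq (g.restrict L) x hx]
      rfl
    refine ⟨π, hπprob, hπnull, ?_, ?_⟩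
    · intro g
      rw [hπint g]
      exact hφge g
    · rw [hπint f₀, hφf₀]
  -- the set of representing measures
  set S : Set (ProbabilityMeasure X) :=
    {π | π.toMeasure Lᶜ = 0 ∧ ∀ f : C(X, ℝ), u f ≤ ∫ x, f x ∂π.toMeasure} with hS
  have hSint : ∀ (π : Measure X), IsProbabilityMeasure π → π Lᶜ = 0 →
      ∀ f : C(X, ℝ), Integrable f π := by
    intro π hπprob hπnull f
    obtain ⟨C, hC⟩ := hLcomp.exists_bound_of_continuousOn f.continuous.continuousOn
    haveI := hπprob
    have hsub : {x | ¬ ‖f x‖ ≤ C} ⊆ Lᶜ := by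
      intro x hx hxL
      exact hx (hC x hxL)
    have hae : ∀ᵐ x ∂π, ‖f x‖ ≤ C := by
      rw [ae_iff]
      exact measure_mono_null hsub hπnull
    exact ⟨f.continuous.aestronglyMeasurable, HasFiniteIntegral.of_bounded hae⟩
  have hsm : ∀ (c : ℝ≥0) (ρ : Measure X), c • ρ = ((c : ℝ≥0∞) • ρ) := by
    intro c ρ
    ext s hs
    simp only [Measure.smul_apply, ENNReal.smul_def, smul_eq_mul]
  have hconvex : ∀ μ₁ ∈ S, ∀ μ₂ ∈ S, ∀ t : NNReal, t ≤ 1 →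
      ∃ σ ∈ S, σ.toMeasure = t • μ₁.toMeasure + (1 - t) • μ₂.toMeasure := by
    intro μ₁ h₁ μ₂ h₂ t ht
    have hμ₁prob : IsProbabilityMeasure μ₁.toMeasure := μ₁.prop
    have hμ₂prob : IsProbabilityMeasure μ₂.toMeasure := μ₂.prop
    set m : Measure X := t • μ₁.toMeasure + (1 - t) • μ₂.toMeasure with hm
    have hts : t + (1 - t) = 1 := by
      rw [add_comm]
      exact tsub_add_cancel_of_le ht
    have hmprob : IsProbabilityMeasure m := by
      constructor
      rw [hm, Measure.add_apply, hsm, hsm, Measure.smul_apply, Measure.smul_apply,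
        measure_univ, measure_univ, smul_eq_mul, smul_eq_mul, mul_one, mul_one,
        ← ENNReal.coe_add, hts, ENNReal.coe_one]
    have hmnull : m Lᶜ = 0 := by
      rw [hm, Measure.add_apply, hsm, hsm, Measure.smul_apply, Measure.smul_apply,
        h₁.1, h₂.1, smul_eq_mul, smul_eq_mul, mul_zero, mul_zero, add_zero]
    have hmint : ∀ f : C(X, ℝ), ∫ x, f x ∂m
        = ((t : ℝ≥0∞)).toReal * ∫ x, f x ∂μ₁.toMeasure
          + (((1 - t : ℝ≥0) : ℝ≥0∞)).toReal * ∫ x, f x ∂μ₂.toMeasure := by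
      intro f
      rw [hm, hsm t, hsm (1 - t), integral_add_measure
        ((hSint _ hμ₁prob h₁.1 f).smul_measure ENNReal.coe_ne_top)
        ((hSint _ hμ₂prob h₂.1 f).smul_measure ENNReal.coe_ne_top),
        integral_smul_measure, integral_smul_measure]
      simp [smul_eq_mul]
    refine ⟨⟨m, hmprob⟩, ⟨hmnull, ?_⟩, rfl⟩
    intro f
    rw [show ProbabilityMeasure.toMeasure ⟨m, hmprob⟩ = m from rfl, hmint f]
    have hA := h₁.2 f
    have hB := h₂.2 f
    set α : ℝ := ((t : ℝ≥0∞)).toReal with hα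
    set β : ℝ := (((1 - t : ℝ≥0) : ℝ≥0∞)).toReal with hβ
    have hα0 : 0 ≤ α := ENNReal.toReal_nonneg
    have hβ0 : 0 ≤ β := ENNReal.toReal_nonneg
    have hαβ : α + β = 1 := by
      rw [hα, hβ, ENNReal.coe_toReal, ENNReal.coe_toReal, ← NNReal.coe_add, hts,
        NNReal.coe_one]
    have e1 := mul_le_mul_of_nonneg_left hA hα0
    have e2 := mul_le_mul_of_nonneg_left hB hβ0
    have e3 : u f = α * u f + β * u f := by
      rw [← add_mul, hαβ, one_mul]
    linarith
  refine ⟨L, S, hLcomp, hconvex, fun π hπ => hπ.1, ?_⟩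
  intro f
  obtain ⟨π, hπprob, hπnull, hπge, hπeq⟩ := hrep f
  have hPiS : (⟨π, hπprob⟩ : ProbabilityMeasure X) ∈ S := ⟨hπnull, fun g => hπge g⟩
  have hmem : u f ∈ {r : ℝ | ∃ μ ∈ S, r = ∫ x, f x ∂μ.toMeasure} :=
    ⟨⟨π, hπprob⟩, hPiS, hπeq.symm⟩
  apply le_antisymm
  · refine le_csInf ⟨u f, hmem⟩ ?_
    rintro r ⟨ν, hν, rfl⟩
    exact hν.2 f
  · refine csInf_le ⟨u f, ?_⟩ hmem
    rintro r ⟨ν, hν, rfl⟩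
    exact hν.2 f
end

section
/- Let X be a Polish space, u : C(X) → ℝ concave, positively homogeneous, monetary and monotone, and suppose u restricted to functions bounded above is represented as u(f) = inf { μ(f·1_L) : μ ∈ S } for a compact set L and probability measures S supported in L. Then for every f ∈ C(X) (not necessarily bounded above), u(f) = u(f ∧ n₀) where n₀ = sup { f(x) : x ∈ L }; i.e., the representation extends to all of C(X). -/
/-!
Let `g = f ⊓ n₀`. Then `g ≤ f`, so `u g ≤ u f`, and `g = f` on `L`. Concavity together with
positive homogeneity makes `u` superadditive, so `u f + u (g - f) ≤ u g`; and `g - f` is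
bounded above and vanishes on `L`, so the representation gives `u (g - f) ≥ 0`. Hence
`u f = u g`, and the representation of `u g` is that of `u f` because the integrands agree on `L`.
-/

open Set Topology Filter MeasureTheory

theorem superadditive_of_concave_of_homogeneous {E : Type*} [AddCommGroup E] [Module ℝ E]
    {u : E → ℝ}
    (hconc : ∀ f g : E, ∀ t : ℝ, 0 ≤ t → t ≤ 1 →
      t * u f + (1 - t) * u g ≤ u (t • f + (1 - t) • g))
    (hhom : ∀ c : ℝ, 0 ≤ c → ∀ f : E, u (c • f) = c * u f) (f g : E) :
    u f + u g ≤ u (f + g) := by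
  have hmid := hconc f g (1 / 2) (by norm_num) (by norm_num)
  rw [show (1 / 2 : ℝ) • f + (1 - 1 / 2 : ℝ) • g = (1 / 2 : ℝ) • (f + g) by module,
    hhom _ (by norm_num)] at hmid
  linarith

/-- No measurability of `s` is needed: `s` lies in the closed set where `f` and `g` agree. -/
theorem setIntegral_congr_fun_of_continuous {X E : Type*} [TopologicalSpace X]
    [MeasurableSpace X] [OpensMeasurableSpace X] [NormedAddCommGroup E] [NormedSpace ℝ E]
    {μ : Measure X} {s : Set X} {f g : X → E} (hf : Continuous f) (hg : Continuous g)
    (h : EqOn f g s) :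
    ∫ x in s, f x ∂μ = ∫ x in s, g x ∂μ :=
  integral_congr_ae <| ae_restrict_of_ae_restrict_of_subset h <|
    ae_restrict_mem (isClosed_eq hf hg).measurableSet

theorem ContinuousMap.eqOn_inf_const_sSup_image {X : Type*} [TopologicalSpace X]
    {L : Set X} (hL : IsCompact L) (f : C(X, ℝ)) :
    EqOn (f ⊓ ContinuousMap.const X (sSup (f '' L))) f L := fun _ hx =>
  min_eq_left <| le_csSup (hL.image f.continuous).bddAbove (mem_image_of_mem f hx)

theorem representation_extends_beyond_bounded_above_general
    {X : Type*} [TopologicalSpace X]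
    [MeasurableSpace X] [BorelSpace X]
    (L : Set X) (hL : IsCompact L)
    (S : Set (ProbabilityMeasure X))
    (u : C(X, ℝ) → ℝ)
    (hconc : ∀ f g : C(X, ℝ), ∀ t : ℝ, 0 ≤ t → t ≤ 1 →
      t * u f + (1 - t) * u g ≤ u (t • f + (1 - t) • g))
    (hhom : ∀ (c : ℝ), 0 ≤ c → ∀ f : C(X, ℝ), u (c • f) = c * u f)
    (hmono : ∀ f g : C(X, ℝ), (∀ x, f x ≤ g x) → u f ≤ u g)
    (hrep : ∀ f : C(X, ℝ), (∃ B : ℝ, ∀ x, f x ≤ B) →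
      u f = sInf {r : ℝ | ∃ μ ∈ S, r = ∫ x in L, f x ∂μ.toMeasure}) :
    ∀ f : C(X, ℝ),
      u f = u (f ⊓ ContinuousMap.const X (sSup (f '' L))) ∧
      u f = sInf {r : ℝ | ∃ μ ∈ S, r = ∫ x in L, f x ∂μ.toMeasure} := by
  intro f
  set g := f ⊓ ContinuousMap.const X (sSup (f '' L))
  have hgf : EqOn g f L := f.eqOn_inf_const_sSup_image hL
  have hint : ∀ μ : ProbabilityMeasure X, ∫ x in L, g x ∂μ.toMeasure = ∫ x in L, f x ∂μ :=
    fun μ => setIntegral_congr_fun_of_continuous g.continuous f.continuous hgf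
  have hdiff : 0 ≤ u (g - f) := by
    rw [hrep (g - f) ⟨0, fun _ => sub_nonpos.mpr inf_le_left⟩]
    refine Real.sInf_nonneg ?_
    rintro _ ⟨μ, -, rfl⟩
    have hzero : EqOn (g - f) 0 L := fun x hx => sub_eq_zero.mpr (hgf hx)
    rw [setIntegral_congr_fun_of_continuous (g - f).continuous continuous_zero hzero]
    simp
  have hfg : u f = u g := by
    refine le_antisymm ?_ (hmono g f fun _ => inf_le_left)
    have hsuper := superadditive_of_concave_of_homogeneous hconc hhom f (g - f)
    rw [add_sub_cancel] at hsuper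
    linarith
  refine ⟨hfg, ?_⟩
  rw [hfg, hrep g ⟨_, fun _ => inf_le_right⟩]
  simp_rw [hint]

/-- Extension of the representation from functions bounded above to all of C(X):
if u is represented on functions bounded above by measures supported in the compact set L,
then u(f) = u(f ∧ n₀) for every f ∈ C(X), where n₀ = sup_L f. -/
theorem representation_extends_beyond_bounded_above
    {X : Type*} [TopologicalSpace X] [PolishSpace X]
    [MeasurableSpace X] [BorelSpace X]
    (L : Set X) (hL : IsCompact L) (hLne : L.Nonempty)
    (S : Set (ProbabilityMeasure X)) (hSsupp : ∀ μ ∈ S, μ.toMeasure Lᶜ = 0)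
    (u : C(X, ℝ) → ℝ)
    (hconc : ∀ f g : C(X, ℝ), ∀ t : ℝ, 0 ≤ t → t ≤ 1 →
      t * u f + (1 - t) * u g ≤ u (t • f + (1 - t) • g))
    (hhom : ∀ (c : ℝ), 0 ≤ c → ∀ f : C(X, ℝ), u (c • f) = c * u f)
    (hcash : ∀ f : C(X, ℝ), ∀ a : ℝ, u (f + ContinuousMap.const X a) = u f + a)
    (hmono : ∀ f g : C(X, ℝ), (∀ x, f x ≤ g x) → u f ≤ u g)
    (hrep : ∀ f : C(X, ℝ), (∃ B : ℝ, ∀ x, f x ≤ B) →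
      u f = sInf {r : ℝ | ∃ μ ∈ S, r = ∫ x in L, f x ∂μ.toMeasure}) :
    ∀ f : C(X, ℝ),
      u f = u (f ⊓ ContinuousMap.const X (sSup (f '' L))) ∧
      u f = sInf {r : ℝ | ∃ μ ∈ S, r = ∫ x in L, f x ∂μ.toMeasure} :=
  representation_extends_beyond_bounded_above_general L hL S u hconc hhom hmono hrep
end
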